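/- arXiv:2504.13105 — 5 statements merged into one kernel-verified Lean document; each statement's English description precedes it below -/
import Mathlib

section
/- For every even integer k ≥ 4, there exists a links system for the construction, i.e., a set L of m unordered pairs of nodes of {1,…,n} partitioned into classes P_1,…,P_k satisfying all of the stated properties of a links system. -/
open Finset

namespace CoverSmallCuts

/-- `nn k` is the number `n = 2 + k(k-1)/2` of nodes. -/
def nn (k : ℕ) : ℕ := 2 + k * (k - 1) / 2

/-- `mm k` is the number `m = k(k-1)/2 + k` of links. -/
def mm (k : ℕ) : ℕ := k * (k - 1) / 2 + k

/-- The nested set `N_i = {1, …, i}`. -/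
def Nset (i : ℕ) : Finset ℕ := Finset.Icc 1 i

/-- The Q-set `Q_j = {2+(j-1)k/2, …, 1+j·k/2}`. -/
def Qset (k j : ℕ) : Finset ℕ := Finset.Icc (2 + (j - 1) * (k / 2)) (1 + j * (k / 2))

/-- Capacity of the path edge `{i, i+1}` of the capacitated graph `G`. -/
def pathCap (k i : ℕ) : ℕ :=
  if i = 1 ∨ i = nn k - 1 then 2
  else if ∃ j ∈ Finset.Icc 1 (k - 1), i ∈ Qset k j ∧ i + 1 ∈ Qset k j then 3
  else 1

/-- Capacity of the cut `δ(S)` in the capacitated graph `G`: the sum of the capacities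
of the edges of `G` with exactly one endpoint in `S`. -/
def cutCap (k : ℕ) (S : Finset ℕ) : ℕ :=
  (∑ i ∈ Finset.Icc 1 (nn k - 1),
      if (i ∈ S) ↔ ((i + 1) ∈ S) then 0 else pathCap k i)
  + (∑ j ∈ Finset.Icc 1 (k - 1),
      if ((1 + (j - 1) * (k / 2)) ∈ S) ↔ ((2 + j * (k / 2)) ∈ S) then 0 else 1)

/-- A links system: the `s,t`-paths `P_1, …, P_{k-1}` are recorded by the function
`node`, where `node i t` is the `t`-th node of the path `P_i` (for `1 ≤ i ≤ k-1` and
`0 ≤ t ≤ k/2 + 1`); the class `P_k` consists of the single link `{1, n}`. -/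
structure LinksSystem (k : ℕ) where
  node : ℕ → ℕ → ℕ
  /-- each path `P_i` starts at `s = 1` -/
  node_first : ∀ i ∈ Finset.Icc 1 (k - 1), node i 0 = 1
  /-- each path `P_i` ends at `t = n` -/
  node_last : ∀ i ∈ Finset.Icc 1 (k - 1), node i (k / 2 + 1) = nn k
  /-- node indices strictly increase along each path -/
  node_mono : ∀ i ∈ Finset.Icc 1 (k - 1), ∀ t ≤ k / 2, node i t < node i (t + 1)
  /-- every node in `{2, …, n-1}` is an internal node of exactly one of `P_1, …, P_{k-1}` -/
  cover : ∀ v ∈ Finset.Icc 2 (nn k - 1),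
      ∃! i, i ∈ Finset.Icc 1 (k - 1) ∧ ∃ t ∈ Finset.Icc 1 (k / 2), node i t = v
  /-- `P_i` has an internal node in `Q_j` iff
  `(i ≤ j ≤ min(i+k/2-1, k-1))` or `(j < i and j ≤ i-k/2)` -/
  meetsQ : ∀ i ∈ Finset.Icc 1 (k - 1), ∀ j ∈ Finset.Icc 1 (k - 1),
      ((∃ t ∈ Finset.Icc 1 (k / 2), node i t ∈ Qset k j) ↔
        ((i ≤ j ∧ j ≤ min (i + k / 2 - 1) (k - 1)) ∨ (j < i ∧ j ≤ i - k / 2)))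

/-- The class `P_i` of links: the edge set of the path `P_i` for `i < k`,
and `{{1, n}}` for `i = k`. -/
def LinksSystem.P {k : ℕ} (LS : LinksSystem k) (i : ℕ) : Finset (Sym2 ℕ) :=
  if i = k then {s(1, nn k)}
  else (Finset.Icc 0 (k / 2)).image fun t => s(LS.node i t, LS.node i (t + 1))

/-- The set `L` of all links. -/
def LinksSystem.links {k : ℕ} (LS : LinksSystem k) : Finset (Sym2 ℕ) :=
  (Finset.Icc 1 k).biUnion LS.P

open scoped Classical in
/-- `deltaL F S` is `δ_F(S)`: the set of links of `F` with exactly one endpoint in `S`. -/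
noncomputable def deltaL (F : Finset (Sym2 ℕ)) (S : Finset ℕ) : Finset (Sym2 ℕ) :=
  F.filter fun e => ∃ a b, e = s(a, b) ∧ a ∈ S ∧ b ∉ S

/-- The 0-1 indicator vector `χ^F` of a set `F` of links. -/
noncomputable def chi (F : Finset (Sym2 ℕ)) : Sym2 ℕ → ℝ :=
  fun e => if e ∈ F then 1 else 0


/-! Write `k = 2h` and index the nodes of `Q_j` by their offset `r < h`, so that the node is
`2 + (j - 1) h + r`. Path `P_i` visits the `h` blocks `Q_i, Q_{i+1}, …` taken cyclically modulo
`2h - 1`, i.e. the blocks `Q_j` with `(j - i) mod (2h - 1) < h`, which is exactly the condition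
of `meetsQ`; in `Q_j` it takes the node at offset `(j - i) mod (2h - 1)`. A node of `Q_j` at
offset `r < h` then lies on exactly one path: the `i` with `(j - i) mod (2h - 1) = r`. -/

section Blocks

variable {h j j' r r' : ℕ}

/-- The node at offset `r` of the block `Q_j` when `k = 2h`. -/
def blockNode (h j r : ℕ) : ℕ := 2 + (j - 1) * h + r

lemma nn_two_mul (h : ℕ) : nn (2 * h) = blockNode h (2 * h) 0 := by
  rw [nn, blockNode, mul_assoc, Nat.mul_div_cancel_left _ two_pos, mul_comm]
  rfl

lemma Qset_two_mul (h j : ℕ) : Qset (2 * h) j = Icc (2 + (j - 1) * h) (1 + j * h) := by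
  rw [Qset, Nat.mul_div_cancel_left _ two_pos]

lemma sub_one_mul_add_self (hj : 1 ≤ j) : (j - 1) * h + h = j * h := by
  rw [← Nat.succ_mul, Nat.succ_eq_add_one, Nat.sub_add_cancel hj]

lemma blockNode_lt_blockNode (hj : 1 ≤ j) (hjj' : j < j') (hr : r < h) :
    blockNode h j r < blockNode h j' r' := by
  have : j * h ≤ (j' - 1) * h := Nat.mul_le_mul_right _ (by omega)
  have := sub_one_mul_add_self (h := h) hj
  unfold blockNode
  omega

lemma blockNode_mem_Qset_iff (hj : 1 ≤ j) (hj' : 1 ≤ j') (hr : r < h) :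
    blockNode h j r ∈ Qset (2 * h) j' ↔ j = j' := by
  rw [Qset_two_mul, mem_Icc]
  constructor
  · intro hmem
    by_contra hne
    rcases Nat.lt_or_gt_of_ne hne with hlt | hlt
    · have := blockNode_lt_blockNode (r' := 0) hj hlt hr
      unfold blockNode at *
      omega
    · have := blockNode_lt_blockNode (h := h) (r := h - 1) (r' := r) hj' hlt (by omega)
      have := sub_one_mul_add_self (h := h) hj'
      unfold blockNode at *
      omega
  · rintro rfl
    have := sub_one_mul_add_self (h := h) hj
    unfold blockNode
    omega

lemma blockNode_inj (hj : 1 ≤ j) (hj' : 1 ≤ j') (hr : r < h) (hr' : r' < h)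
    (heq : blockNode h j r = blockNode h j' r') : j = j' ∧ r = r' := by
  have hjj' : j = j' := by
    rw [← blockNode_mem_Qset_iff hj hj' hr, heq, blockNode_mem_Qset_iff hj' hj' hr']
  subst hjj'
  exact ⟨rfl, by unfold blockNode at heq; omega⟩

lemma exists_blockNode_eq {v : ℕ} (hv : v ∈ Icc 2 (nn (2 * h) - 1)) :
    ∃ j ∈ Icc 1 (2 * h - 1), ∃ r < h, blockNode h j r = v := by
  rw [nn_two_mul, blockNode, mem_Icc] at hv
  have hh : 0 < h := Nat.pos_of_ne_zero (by rintro rfl; simp at hv; omega)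
  refine ⟨(v - 2) / h + 1, mem_Icc.2 ⟨Nat.le_add_left 1 _, ?_⟩, (v - 2) % h, Nat.mod_lt _ hh,
    ?_⟩
  · have : (v - 2) / h < 2 * h - 1 := (Nat.div_lt_iff_lt_mul hh).2 (by omega)
    omega
  · rw [blockNode, Nat.add_sub_cancel, mul_comm, add_assoc, Nat.div_add_mod]
    omega

end Blocks

section Paths

variable {h i j t : ℕ}

/-- The block `Q_j` containing the `t`-th internal node of `P_i`, when `k = 2h`. -/
def pathBlock (h i t : ℕ) : ℕ :=
  if i ≤ h then i + t - 1 else if t ≤ i - h then t else t + h - 1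

/-- `(j - i) mod (2h - 1)`, for `1 ≤ i, j ≤ 2h - 1`. -/
def cyclicOffset (h i j : ℕ) : ℕ :=
  if i ≤ j then j - i else j + (2 * h - 1) - i

lemma pathBlock_mem (hi : i ∈ Icc 1 (2 * h - 1)) (ht : t ∈ Icc 1 h) :
    pathBlock h i t ∈ Icc 1 (2 * h - 1) := by
  simp only [mem_Icc] at *
  unfold pathBlock
  split_ifs <;> omega

lemma pathBlock_lt_pathBlock_succ (hi : i ∈ Icc 1 (2 * h - 1)) (ht : 1 ≤ t) :
    pathBlock h i t < pathBlock h i (t + 1) := by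
  simp only [mem_Icc] at hi
  unfold pathBlock
  split_ifs <;> omega

lemma cyclicOffset_pathBlock_lt (hi : i ∈ Icc 1 (2 * h - 1)) (ht : t ∈ Icc 1 h) :
    cyclicOffset h i (pathBlock h i t) < h := by
  simp only [mem_Icc] at *
  unfold cyclicOffset pathBlock
  split_ifs <;> omega

lemma cyclicOffset_lt_iff (hi : i ∈ Icc 1 (2 * h - 1)) (hj : j ∈ Icc 1 (2 * h - 1)) :
    cyclicOffset h i j < h ↔
      (i ≤ j ∧ j ≤ min (i + h - 1) (2 * h - 1)) ∨ (j < i ∧ j ≤ i - h) := by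
  simp only [mem_Icc] at *
  unfold cyclicOffset
  split_ifs <;> omega

lemma exists_pathBlock_eq_iff (hi : i ∈ Icc 1 (2 * h - 1)) (hj : j ∈ Icc 1 (2 * h - 1)) :
    (∃ t ∈ Icc 1 h, pathBlock h i t = j) ↔
      (i ≤ j ∧ j ≤ min (i + h - 1) (2 * h - 1)) ∨ (j < i ∧ j ≤ i - h) := by
  simp only [mem_Icc] at *
  unfold pathBlock
  constructor
  · rintro ⟨t, ht, rfl⟩
    split_ifs <;> omega
  · intro hwin
    by_cases hih : i ≤ h
    · exact ⟨j + 1 - i, by omega, by simp only [if_pos hih]; omega⟩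
    by_cases hji : j ≤ i - h
    · exact ⟨j, by omega, by simp only [if_neg hih, if_pos hji]⟩
    · exact ⟨j + 1 - h, by omega, by simp only [if_neg hih]; split_ifs <;> omega⟩

lemma existsUnique_cyclicOffset_eq (hj : j ∈ Icc 1 (2 * h - 1)) {r : ℕ} (hr : r < h) :
    ∃! i, i ∈ Icc 1 (2 * h - 1) ∧ cyclicOffset h i j = r := by
  simp only [mem_Icc] at *
  unfold cyclicOffset
  by_cases hrj : r < j
  · refine ⟨j - r, ⟨by omega, by rw [if_pos (by omega)]; omega⟩, ?_⟩
    rintro i ⟨hi, hij⟩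
    split_ifs at hij <;> omega
  · refine ⟨j + (2 * h - 1) - r, ⟨by omega, by rw [if_neg (by omega)]; omega⟩, ?_⟩
    rintro i ⟨hi, hij⟩
    split_ifs at hij <;> omega

def pathNode (h i t : ℕ) : ℕ :=
  if t = 0 then 1
  else if t = h + 1 then nn (2 * h)
  else blockNode h (pathBlock h i t) (cyclicOffset h i (pathBlock h i t))

lemma pathNode_of_mem (ht : t ∈ Icc 1 h) :
    pathNode h i t = blockNode h (pathBlock h i t) (cyclicOffset h i (pathBlock h i t)) := by
  rw [mem_Icc] at ht
  rw [pathNode, if_neg (by omega), if_neg (by omega)]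

lemma pathNode_lt_pathNode_succ (hi : i ∈ Icc 1 (2 * h - 1)) (ht : t ≤ h) :
    pathNode h i t < pathNode h i (t + 1) := by
  have hh : 1 ≤ h := by rw [mem_Icc] at hi; omega
  rcases Nat.eq_zero_or_pos t with rfl | ht0
  · rw [pathNode_of_mem (mem_Icc.2 ⟨le_rfl, hh⟩), pathNode, if_pos rfl, blockNode]
    omega
  have hblock := pathBlock_mem hi (mem_Icc.2 ⟨ht0, ht⟩)
  rw [mem_Icc] at hblock
  rw [pathNode_of_mem (mem_Icc.2 ⟨ht0, ht⟩)]
  rcases Nat.lt_or_eq_of_le ht with ht | rfl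
  · rw [pathNode_of_mem (mem_Icc.2 ⟨by omega, ht⟩)]
    exact blockNode_lt_blockNode hblock.1 (pathBlock_lt_pathBlock_succ hi ht0)
      (cyclicOffset_pathBlock_lt hi (mem_Icc.2 ⟨ht0, ht.le⟩))
  · rw [pathNode, if_neg (by omega), if_pos rfl, nn_two_mul]
    exact blockNode_lt_blockNode hblock.1 (by omega)
      (cyclicOffset_pathBlock_lt hi (mem_Icc.2 ⟨ht0, le_rfl⟩))

lemma exists_pathNode_eq_blockNode_iff (hi : i ∈ Icc 1 (2 * h - 1)) (hj : j ∈ Icc 1 (2 * h - 1))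
    {r : ℕ} (hr : r < h) :
    (∃ t ∈ Icc 1 h, pathNode h i t = blockNode h j r) ↔ cyclicOffset h i j = r := by
  constructor
  · rintro ⟨t, ht, heq⟩
    rw [pathNode_of_mem ht] at heq
    obtain ⟨rfl, rfl⟩ := blockNode_inj (mem_Icc.1 (pathBlock_mem hi ht)).1 (mem_Icc.1 hj).1
      (cyclicOffset_pathBlock_lt hi ht) hr heq
    rfl
  · rintro rfl
    obtain ⟨t, ht, rfl⟩ := (exists_pathBlock_eq_iff hi hj).2 ((cyclicOffset_lt_iff hi hj).1 hr)
    exact ⟨t, ht, pathNode_of_mem ht⟩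

lemma exists_pathNode_mem_Qset_iff (hi : i ∈ Icc 1 (2 * h - 1)) (hj : j ∈ Icc 1 (2 * h - 1)) :
    (∃ t ∈ Icc 1 h, pathNode h i t ∈ Qset (2 * h) j) ↔
      (i ≤ j ∧ j ≤ min (i + h - 1) (2 * h - 1)) ∨ (j < i ∧ j ≤ i - h) := by
  rw [← exists_pathBlock_eq_iff hi hj]
  refine exists_congr fun t => and_congr_right fun ht => ?_
  rw [pathNode_of_mem ht, blockNode_mem_Qset_iff (mem_Icc.1 (pathBlock_mem hi ht)).1
    (mem_Icc.1 hj).1 (cyclicOffset_pathBlock_lt hi ht)]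

end Paths

def linksSystem (h : ℕ) : LinksSystem (2 * h) where
  node := pathNode h
  node_first _ _ := if_pos rfl
  node_last _ _ := by
    rw [Nat.mul_div_cancel_left _ two_pos, pathNode, if_neg (by omega), if_pos rfl]
  node_mono i hi t ht := by
    rw [Nat.mul_div_cancel_left _ two_pos] at ht
    exact pathNode_lt_pathNode_succ hi ht
  cover v hv := by
    obtain ⟨j, hj, r, hr, rfl⟩ := exists_blockNode_eq hv
    rw [Nat.mul_div_cancel_left _ two_pos]
    exact (existsUnique_congr fun i => and_congr_right fun hi =>
      exists_pathNode_eq_blockNode_iff hi hj hr).2 (existsUnique_cyclicOffset_eq hj hr)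
  meetsQ i hi j hj := by
    rw [Nat.mul_div_cancel_left _ two_pos]
    exact exists_pathNode_mem_Qset_iff hi hj

theorem statement0_general (k : ℕ) (hke : Even k) :
    Nonempty (LinksSystem k) := by
  obtain ⟨h, rfl⟩ := hke
  rw [← two_mul]
  exact ⟨linksSystem h⟩

/-- For every even integer `k ≥ 4`, there exists a links system for the
construction. -/
theorem statement0 (k : ℕ) (hk : 4 ≤ k) (hke : Even k) :
    Nonempty (LinksSystem k) :=
  statement0_general k hke

end CoverSmallCuts
end

section
/- For every S ⊆ {1,…,n} with ∅ ≠ S ≠ {1,…,n} such that S is not equal to any nested set N_i (i = 1,…,n−1), not the complement of any N_i, not equal to any Q-set Q_j (j = 1,…,k−1), and not the complement of any Q_j, the cut δ(S) has capacity at least 5. -/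
/-!
Record `S` by its cut path edges, the edge `{i, i+1}` by `i`. These determine `S` up to
complement, so a single cut path edge makes `S` a nested set or the complement of one, and cuts
exactly at the two ends of `Q_j` make it `Q_j` or its complement. Writing `bd k p = 1 + p·k/2`,
the extra edge `j` bypasses the path edges `bd k (j-1), …, bd k j`, so it is cut when exactly
one of them is.

Let `a < b` be the first and last cut path edges. Each contributes at least `2`: its capacity
is `2` or `3`, unless it is some `bd k p` with `0 < p < k - 1`, and then the window beyond it
(ending at `a`, or starting at `b`) contains no other cut, so its extra edge is cut. The fifth
unit is a third cut path edge, or an end lying inside a Q-set (capacity `3`), or, when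
`a = bd k p` and `b = bd k q` with `q ≥ p + 2`, the extra edge `p + 1`, since `q = p + 1` would
make `S` a Q-set or its complement.
-/

open Finset

namespace CoverSmallCuts

theorem card_filter_add_card_filter_add_card_filter_le {α : Type*} (s : Finset α)
    {p q r : α → Prop} [DecidablePred p] [DecidablePred q] [DecidablePred r]
    (hpq : ∀ x ∈ s, p x → ¬q x) (hpr : ∀ x ∈ s, p x → ¬r x) (hqr : ∀ x ∈ s, q x → ¬r x) :
    #(s.filter p) + #(s.filter q) + #(s.filter r) ≤ #s := by
  rw [card_filter, card_filter, card_filter, ← sum_add_distrib, ← sum_add_distrib,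
    card_eq_sum_ones]
  refine sum_le_sum fun x hx => ?_
  have := hpq x hx; have := hpr x hx; have := hqr x hx
  split_ifs <;> simp_all

theorem iff_of_forall_iff_succ {p : ℕ → Prop} {x y : ℕ} (hxy : x ≤ y)
    (h : ∀ i, x ≤ i → i < y → (p i ↔ p (i + 1))) : p x ↔ p y := by
  induction y, hxy using Nat.le_induction with
  | base => rfl
  | succ y hxy ih =>
    exact (ih fun i hi hiy => h i hi (by omega)).trans (h y hxy (by omega))

def Separates (S : Finset ℕ) (x y : ℕ) : Prop := ¬(x ∈ S ↔ y ∈ S)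

instance (S : Finset ℕ) (x y : ℕ) : Decidable (Separates S x y) :=
  inferInstanceAs (Decidable ¬_)

theorem separates_of_forall_eq {S : Finset ℕ} {x y c : ℕ} (hxc : x ≤ c) (hcy : c < y)
    (hc : Separates S c (c + 1))
    (hunique : ∀ i, x ≤ i → i < y → Separates S i (i + 1) → i = c) :
    Separates S x y := by
  have hleft : x ∈ S ↔ c ∈ S := iff_of_forall_iff_succ hxc fun i hi hic => by
    by_contra h; exact absurd (hunique i hi (by omega) h) (by omega)
  have hright : c + 1 ∈ S ↔ y ∈ S := iff_of_forall_iff_succ hcy fun i hi hiy => by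
    by_contra h; exact absurd (hunique i (by omega) hiy h) (by omega)
  unfold Separates at *
  tauto

/-- The path edge `{i, i+1}` is recorded as `i`. -/
def cutEdges (n : ℕ) (S : Finset ℕ) : Finset ℕ :=
  (Icc 1 (n - 1)).filter fun i => Separates S i (i + 1)

theorem mem_cutEdges {n : ℕ} {S : Finset ℕ} {i : ℕ} :
    i ∈ cutEdges n S ↔ 1 ≤ i ∧ i ≤ n - 1 ∧ Separates S i (i + 1) := by
  simp [cutEdges, and_assoc]

theorem eq_or_eq_sdiff_of_cutEdges_eq {n : ℕ} {S T : Finset ℕ} (hS : S ⊆ Icc 1 n)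
    (hT : T ⊆ Icc 1 n) (h : cutEdges n S = cutEdges n T) :
    S = T ∨ S = Icc 1 n \ T := by
  have hagree : ∀ x ∈ Icc 1 n, (1 ∈ S ↔ 1 ∈ T) ↔ (x ∈ S ↔ x ∈ T) := by
    intro x hx
    rw [mem_Icc] at hx
    refine iff_of_forall_iff_succ (p := fun i => i ∈ S ↔ i ∈ T) hx.1 fun i hi hin => ?_
    have hcut : Separates S i (i + 1) ↔ Separates T i (i + 1) := by
      have hi' : i ∈ cutEdges n S ↔ i ∈ cutEdges n T := by rw [h]
      simp only [mem_cutEdges] at hi'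
      exact ⟨fun hs => (hi'.1 ⟨hi, by omega, hs⟩).2.2, fun ht => (hi'.2 ⟨hi, by omega, ht⟩).2.2⟩
    unfold Separates at hcut
    tauto
  by_cases h1 : 1 ∈ S ↔ 1 ∈ T
  · left
    ext x
    by_cases hx : x ∈ Icc 1 n
    · exact (hagree x hx).1 h1
    · exact iff_of_false (fun h => hx (hS h)) (fun h => hx (hT h))
  · right
    ext x
    rw [mem_sdiff]
    by_cases hx : x ∈ Icc 1 n
    · have := (not_congr (hagree x hx)).1 h1
      tauto
    · exact iff_of_false (fun h => hx (hS h)) (fun h => hx h.1)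

theorem cutEdges_empty (n : ℕ) : cutEdges n ∅ = ∅ := by
  simp [cutEdges, Separates]

theorem cutEdges_Nset {n a : ℕ} (ha : a ∈ Icc 1 (n - 1)) : cutEdges n (Nset a) = {a} := by
  ext i
  simp only [mem_cutEdges, Separates, Nset, mem_Icc, mem_singleton] at ha ⊢
  omega

theorem cutEdges_nontrivial {n : ℕ} {S : Finset ℕ} (hsub : S ⊆ Icc 1 n) (hne : S.Nonempty)
    (hproper : S ≠ Icc 1 n) (hN : ∀ i ∈ Icc 1 (n - 1), S ≠ Nset i ∧ S ≠ Icc 1 n \ Nset i) :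
    (cutEdges n S).Nontrivial := by
  rcases (cutEdges n S).eq_empty_or_nonempty with h | h
  · rw [← cutEdges_empty n] at h
    rcases eq_or_eq_sdiff_of_cutEdges_eq hsub (empty_subset _) h with rfl | rfl
    · exact absurd hne not_nonempty_empty
    · exact absurd sdiff_empty hproper
  rcases h.exists_eq_singleton_or_nontrivial with ⟨a, ha⟩ | h
  · have haI : a ∈ Icc 1 (n - 1) := filter_subset _ _ (ha ▸ mem_singleton_self a)
    rw [← cutEdges_Nset haI] at ha
    have hNsub : Nset a ⊆ Icc 1 n := Icc_subset_Icc_right (by rw [mem_Icc] at haI; omega)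
    rcases eq_or_eq_sdiff_of_cutEdges_eq hsub hNsub ha with h | h
    exacts [absurd h (hN a haI).1, absurd h (hN a haI).2]
  · exact h

/-- `bd k p` is the last node of `Q_p` (and `bd k 0 = s`); the extra edge `j` joins
`bd k (j - 1)` to `bd k j + 1`. -/
def bd (k p : ℕ) : ℕ := 1 + p * (k / 2)

section Grid

variable {k : ℕ}

theorem bd_succ (k p : ℕ) : bd k (p + 1) = bd k p + k / 2 := by
  unfold bd; ring

theorem bd_zero (k : ℕ) : bd k 0 = 1 := by
  simp [bd]

theorem one_le_bd (k p : ℕ) : 1 ≤ bd k p :=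
  Nat.le_add_right 1 _

theorem bd_mono (k : ℕ) : Monotone (bd k) := fun _ _ h => by
  unfold bd; gcongr

theorem bd_le_bd_iff (hk : 2 ≤ k) {p q : ℕ} : bd k p ≤ bd k q ↔ p ≤ q := by
  unfold bd
  rw [Nat.add_le_add_iff_left, Nat.mul_le_mul_right_iff (by omega)]

theorem bd_lt_bd_iff (hk : 2 ≤ k) {p q : ℕ} : bd k p < bd k q ↔ p < q := by
  unfold bd
  rw [Nat.add_lt_add_iff_left, Nat.mul_lt_mul_right (by omega)]

theorem bd_pred_eq_nn_sub_one (hke : Even k) : bd k (k - 1) = nn k - 1 := by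
  obtain ⟨h, rfl⟩ := hke
  have hpair : (h + h) * (h + h - 1) = 2 * ((h + h - 1) * h) := by ring
  unfold bd nn
  rw [hpair, Nat.mul_div_cancel_left _ two_pos, show (h + h) / 2 = h by omega]
  omega

theorem bd_le_nn_sub_one (hk : 2 ≤ k) (hke : Even k) {j : ℕ} (hj : j ≤ k - 1) :
    bd k j ≤ nn k - 1 :=
  bd_pred_eq_nn_sub_one hke ▸ (bd_le_bd_iff hk).2 hj

theorem cutEdges_Qset (hk : 2 ≤ k) (hke : Even k) {j : ℕ} (hj : j ∈ Icc 1 (k - 1)) :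
    cutEdges (nn k) (Qset k j) = {bd k (j - 1), bd k j} := by
  rw [mem_Icc] at hj
  have hstep : bd k j = bd k (j - 1) + k / 2 := by
    rw [← bd_succ, Nat.sub_add_cancel hj.1]
  have hlast := bd_le_nn_sub_one hk hke hj.2
  ext i
  simp only [mem_cutEdges, Separates, Qset, mem_Icc, mem_insert, mem_singleton]
  unfold bd at *
  omega

theorem exists_eq_bd_or_mem_window (hk : 2 ≤ k) (hke : Even k) {i : ℕ}
    (hi : i ∈ Icc 1 (nn k - 1)) :
    (∃ p ≤ k - 1, i = bd k p) ∨ ∃ j ∈ Icc 1 (k - 1), bd k (j - 1) < i ∧ i < bd k j := by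
  rw [mem_Icc, ← bd_pred_eq_nn_sub_one hke] at hi
  obtain ⟨p, r, hr, rfl⟩ : ∃ p r, r < k / 2 ∧ i = bd k p + r :=
    ⟨(i - 1) / (k / 2), (i - 1) % (k / 2), Nat.mod_lt _ (by omega), by
      unfold bd; have := Nat.div_add_mod' (i - 1) (k / 2); omega⟩
  rcases Nat.eq_zero_or_pos r with rfl | hr0
  · exact Or.inl ⟨p, (bd_le_bd_iff hk).1 hi.2, rfl⟩
  · have hp : p < k - 1 := (bd_lt_bd_iff hk).1 (by omega)
    refine Or.inr ⟨p + 1, mem_Icc.2 ⟨by omega, by omega⟩, ?_, ?_⟩ <;>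
      simp only [Nat.add_sub_cancel, bd_succ] <;> omega

end Grid

/-- The extra edge `{bd k (j - 1), bd k j + 1}` is recorded as `j`. -/
def cutExtras (k : ℕ) (S : Finset ℕ) : Finset ℕ :=
  (Icc 1 (k - 1)).filter fun j => Separates S (bd k (j - 1)) (bd k j + 1)

section Capacity

variable {k : ℕ}

theorem one_le_pathCap (k i : ℕ) : 1 ≤ pathCap k i := by
  unfold pathCap
  split_ifs <;> omega

theorem pathCap_one (k : ℕ) : pathCap k 1 = 2 := by
  simp [pathCap]

theorem pathCap_nn_sub_one (k : ℕ) : pathCap k (nn k - 1) = 2 := by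
  simp [pathCap]

theorem pathCap_eq_three (hk : 2 ≤ k) (hke : Even k) {i j : ℕ} (hj : j ∈ Icc 1 (k - 1))
    (hlo : bd k (j - 1) < i) (hhi : i < bd k j) : pathCap k i = 3 := by
  have hlast := bd_le_nn_sub_one hk hke (mem_Icc.1 hj).2
  have hfirst := one_le_bd k (j - 1)
  have hQ : ∀ x, bd k (j - 1) < x → x ≤ bd k j → x ∈ Qset k j := fun x h1 h2 => by
    unfold bd at h1 h2; rw [Qset, mem_Icc]; omega
  unfold pathCap
  rw [if_neg (by omega), if_pos ⟨j, hj, hQ i hlo hhi.le, hQ (i + 1) (by omega) hhi⟩]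

theorem cutCap_eq (k : ℕ) (S : Finset ℕ) :
    cutCap k S = ∑ i ∈ cutEdges (nn k) S, pathCap k i + #(cutExtras k S) := by
  have hextra : ∀ j, 2 + j * (k / 2) = 1 + j * (k / 2) + 1 := fun j => by omega
  rw [cutCap, cutEdges, cutExtras, sum_filter, card_filter]
  unfold Separates bd
  simp only [hextra]
  congr 1 <;> exact sum_congr rfl fun _ _ => by split_ifs with h <;> simp [h]

end Capacity

section Windows

variable {k : ℕ} {S : Finset ℕ}

theorem mem_cutExtras_of_forall_eq (hk : 2 ≤ k) (hke : Even k) {j c : ℕ}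
    (hj : j ∈ Icc 1 (k - 1)) (hc : c ∈ cutEdges (nn k) S) (hlo : bd k (j - 1) ≤ c)
    (hhi : c ≤ bd k j)
    (hunique : ∀ i ∈ cutEdges (nn k) S, bd k (j - 1) ≤ i → i ≤ bd k j → i = c) :
    j ∈ cutExtras k S := by
  have hlast := bd_le_nn_sub_one hk hke (mem_Icc.1 hj).2
  have hfirst := one_le_bd k (j - 1)
  refine mem_filter.2 ⟨hj, separates_of_forall_eq hlo (by omega) (mem_cutEdges.1 hc).2.2
    fun i h1 h2 hi => hunique i (mem_cutEdges.2 ⟨by omega, by omega, hi⟩) h1 (by omega)⟩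

theorem two_le_pathCap_add_card_left (hk : 2 ≤ k) (hke : Even k) {a : ℕ}
    (ha : a ∈ cutEdges (nn k) S) (hmin : ∀ i ∈ cutEdges (nn k) S, a ≤ i) :
    2 ≤ pathCap k a + #((cutExtras k S).filter fun j => bd k j ≤ a) := by
  rcases exists_eq_bd_or_mem_window hk hke (filter_subset _ _ ha) with
    ⟨p, hp, rfl⟩ | ⟨j, hj, hlo, hhi⟩
  · rcases Nat.eq_zero_or_pos p with rfl | hp0
    · rw [bd_zero, pathCap_one]
      omega
    · have hwindow : p ∈ cutExtras k S :=
        mem_cutExtras_of_forall_eq hk hke (mem_Icc.2 ⟨hp0, hp⟩) ha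
          ((bd_le_bd_iff hk).2 (by omega)) le_rfl fun i hi _ h2 => le_antisymm h2 (hmin i hi)
      have hmem : p ∈ (cutExtras k S).filter fun j => bd k j ≤ bd k p :=
        mem_filter.2 ⟨hwindow, le_rfl⟩
      have := card_pos.2 ⟨p, hmem⟩
      have := one_le_pathCap k (bd k p)
      omega
  · rw [pathCap_eq_three hk hke hj hlo hhi]
    omega

theorem two_le_pathCap_add_card_right (hk : 2 ≤ k) (hke : Even k) {b : ℕ}
    (hb : b ∈ cutEdges (nn k) S) (hmax : ∀ i ∈ cutEdges (nn k) S, i ≤ b) :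
    2 ≤ pathCap k b + #((cutExtras k S).filter fun j => b ≤ bd k (j - 1)) := by
  rcases exists_eq_bd_or_mem_window hk hke (filter_subset _ _ hb) with
    ⟨q, hq, rfl⟩ | ⟨j, hj, hlo, hhi⟩
  · rcases hq.eq_or_lt with rfl | hq
    · rw [bd_pred_eq_nn_sub_one hke, pathCap_nn_sub_one]
      omega
    · have hwindow : q + 1 ∈ cutExtras k S := by
        refine mem_cutExtras_of_forall_eq hk hke (mem_Icc.2 ⟨by omega, by omega⟩) hb
          (by rw [Nat.add_sub_cancel]) ((bd_le_bd_iff hk).2 (by omega)) fun i hi h1 _ => ?_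
        rw [Nat.add_sub_cancel] at h1
        exact le_antisymm (hmax i hi) h1
      have hmem : q + 1 ∈ (cutExtras k S).filter fun j => bd k q ≤ bd k (j - 1) :=
        mem_filter.2 ⟨hwindow, by rw [Nat.add_sub_cancel]⟩
      have := card_pos.2 ⟨q + 1, hmem⟩
      have := one_le_pathCap k (bd k q)
      omega
  · rw [pathCap_eq_three hk hke hj hlo hhi]
    omega

end Windows

section Ends

variable {k : ℕ} {S : Finset ℕ} {a b : ℕ}

theorem ends_add_le_cutCap (hab : a < b) (ha : a ∈ cutEdges (nn k) S)
    (hb : b ∈ cutEdges (nn k) S) :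
    (pathCap k a + #((cutExtras k S).filter fun j => bd k j ≤ a))
      + (pathCap k b + #((cutExtras k S).filter fun j => b ≤ bd k (j - 1)))
      + (∑ i ∈ ((cutEdges (nn k) S).erase a).erase b, pathCap k i
        + #((cutExtras k S).filter fun j => a < bd k j ∧ bd k (j - 1) < b))
      ≤ cutCap k S := by
  have hsum : pathCap k a + (pathCap k b + ∑ i ∈ ((cutEdges (nn k) S).erase a).erase b,
      pathCap k i) = ∑ i ∈ cutEdges (nn k) S, pathCap k i := by
    rw [add_sum_erase _ _ (mem_erase.2 ⟨hab.ne', hb⟩), add_sum_erase _ _ ha]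
  have hcard := card_filter_add_card_filter_add_card_filter_le (cutExtras k S)
    (p := fun j => bd k j ≤ a) (q := fun j => b ≤ bd k (j - 1))
    (r := fun j => a < bd k j ∧ bd k (j - 1) < b)
    (fun j _ h1 h2 => by have := bd_mono k (Nat.sub_le j 1); omega)
    (fun _ _ h1 h2 => by omega) (fun _ _ h1 h2 => by omega)
  rw [cutCap_eq]
  omega

theorem one_le_middle_or_pathCap_eq_three (hk : 2 ≤ k) (hke : Even k)
    (hsub : S ⊆ Icc 1 (nn k))
    (hQ : ∀ j ∈ Icc 1 (k - 1), S ≠ Qset k j ∧ S ≠ Icc 1 (nn k) \ Qset k j)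
    (hab : a < b) (ha : a ∈ cutEdges (nn k) S) (hb : b ∈ cutEdges (nn k) S) :
    1 ≤ ∑ i ∈ ((cutEdges (nn k) S).erase a).erase b, pathCap k i
        + #((cutExtras k S).filter fun j => a < bd k j ∧ bd k (j - 1) < b)
      ∨ pathCap k a = 3 ∨ pathCap k b = 3 := by
  by_cases hrest : (((cutEdges (nn k) S).erase a).erase b).Nonempty
  · obtain ⟨c, hc⟩ := hrest
    exact Or.inl ((one_le_pathCap k c).trans
      ((single_le_sum (fun _ _ => Nat.zero_le _) hc).trans (Nat.le_add_right _ _)))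
  have hpair : ∀ i ∈ cutEdges (nn k) S, i = a ∨ i = b := fun i hi => by
    by_contra h
    exact hrest ⟨i, mem_erase.2 ⟨fun hb => h (Or.inr hb),
      mem_erase.2 ⟨fun ha => h (Or.inl ha), hi⟩⟩⟩
  rcases exists_eq_bd_or_mem_window hk hke (filter_subset _ _ ha) with
    ⟨p, hp, rfl⟩ | ⟨j, hj, hlo, hhi⟩
  swap
  · exact Or.inr (Or.inl (pathCap_eq_three hk hke hj hlo hhi))
  rcases exists_eq_bd_or_mem_window hk hke (filter_subset _ _ hb) with
    ⟨q, hq, rfl⟩ | ⟨j, hj, hlo, hhi⟩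
  swap
  · exact Or.inr (Or.inr (pathCap_eq_three hk hke hj hlo hhi))
  have hpq := (bd_lt_bd_iff hk).1 hab
  rcases (show q = p + 1 ∨ p + 1 < q by omega) with rfl | hpq
  · have hjQ : p + 1 ∈ Icc 1 (k - 1) := mem_Icc.2 ⟨by omega, hq⟩
    have hcut : cutEdges (nn k) S = cutEdges (nn k) (Qset k (p + 1)) := by
      rw [cutEdges_Qset hk hke hjQ, Nat.add_sub_cancel]
      ext i
      refine ⟨fun hi => ?_, fun hi => ?_⟩
      · simpa using hpair i hi
      · rcases mem_insert.1 hi with rfl | hi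
        exacts [ha, mem_singleton.1 hi ▸ hb]
    have hQsub : Qset k (p + 1) ⊆ Icc 1 (nn k) :=
      Icc_subset_Icc (by omega) (by have := bd_le_nn_sub_one hk hke hq; unfold bd at this; omega)
    rcases eq_or_eq_sdiff_of_cutEdges_eq hsub hQsub hcut with h | h
    exacts [absurd h (hQ _ hjQ).1, absurd h (hQ _ hjQ).2]
  · left
    have hwindow : p + 1 ∈ cutExtras k S := by
      refine mem_cutExtras_of_forall_eq hk hke (mem_Icc.2 ⟨by omega, by omega⟩) ha
        (by rw [Nat.add_sub_cancel]) ((bd_le_bd_iff hk).2 (by omega)) fun i hi _ h2 => ?_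
      have := (bd_lt_bd_iff hk).2 hpq
      rcases hpair i hi with rfl | rfl
      exacts [rfl, by omega]
    have hmem : p + 1 ∈
        (cutExtras k S).filter fun j => bd k p < bd k j ∧ bd k (j - 1) < bd k q :=
      mem_filter.2 ⟨hwindow, (bd_lt_bd_iff hk).2 (by omega),
        by rw [Nat.add_sub_cancel]; exact hab⟩
    have := card_pos.2 ⟨p + 1, hmem⟩
    omega

end Ends

/-- every nonempty proper `S ⊆ {1, …, n}` which is neither a nested set
nor a Q-set nor the complement of one of these has cut capacity at least `5`. -/
theorem statement2 (k : ℕ) (hk : 4 ≤ k) (hke : Even k) (S : Finset ℕ)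
    (hsub : S ⊆ Finset.Icc 1 (nn k)) (hne : S.Nonempty)
    (hproper : S ≠ Finset.Icc 1 (nn k))
    (hN : ∀ i ∈ Finset.Icc 1 (nn k - 1),
      S ≠ Nset i ∧ S ≠ Finset.Icc 1 (nn k) \ Nset i)
    (hQ : ∀ j ∈ Finset.Icc 1 (k - 1),
      S ≠ Qset k j ∧ S ≠ Finset.Icc 1 (nn k) \ Qset k j) :
    5 ≤ cutCap k S := by
  have hk2 : 2 ≤ k := by omega
  have hcuts := cutEdges_nontrivial hsub hne hproper hN
  obtain ⟨a, b, hab, ha, hb, hmin, hmax⟩ : ∃ a b, a < b ∧ a ∈ cutEdges (nn k) S ∧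
      b ∈ cutEdges (nn k) S ∧ (∀ i ∈ cutEdges (nn k) S, a ≤ i) ∧
      ∀ i ∈ cutEdges (nn k) S, i ≤ b :=
    ⟨_, _, min'_lt_max'_of_card _ (one_lt_card_iff_nontrivial.2 hcuts), min'_mem _ _,
      max'_mem _ _, fun i hi => min'_le _ i hi, fun i hi => le_max' _ i hi⟩
  have hleft := two_le_pathCap_add_card_left hk2 hke ha hmin
  have hright := two_le_pathCap_add_card_right hk2 hke hb hmax
  have hmiddle := one_le_middle_or_pathCap_eq_three hk2 hke hsub hQ hab ha hb
  have hends := ends_add_le_cutCap hab ha hb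
  omega

end CoverSmallCuts
end

section
/- Let k ≥ 4 be an even integer and let M be the (k−1)×(k−1) rational matrix with rows and columns indexed by 0,…,k−2 and M_{i,j} = 1 if (j − i) mod (k−1) ∈ {0,1,…,k/2−1} and M_{i,j} = 0 otherwise (a circulant 0–1 matrix each of whose rows consists of k/2 consecutive ones with wrap-around). Then M has rank k−1 and det M = k/2. -/
open Finset

namespace CoverSmallCuts

/-!
Write `n = k - 1` and `c = k / 2`, so `n + 1 = 2 * c`. Then `2 * s * c ≡ s` and
`(2 * s + 1) * c ≡ s + c (mod n)`, so for `r < n` the residue of `r * c` is `< c` exactly when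
`r` is even. Relabelling rows and columns by `t ↦ t * c` therefore turns the band matrix into the
circulant matrix whose `(t, u)` entry is `1` iff `(u - t) mod n` is even. In that matrix, row `t`
minus row `t + 2` is `e_t - e_{t+1}` whenever `t + 2 < n`. After these row operations, replace
every column except the last by the sum of the columns up to it. The result is lower triangular
with diagonal `1, …, 1, c, 1`, where `c` is a row sum. Both operations are unitriangular, so the
determinant is `c`.
-/

open Matrix

theorem mul_mod_lt_iff_even {n c r : ℕ} (hc : n + 1 = 2 * c) (hr : r < n) :
    r * c % n < c ↔ Even r := by
  obtain ⟨s, rfl | rfl⟩ := Nat.even_or_odd' r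
  · rw [show 2 * s * c = s + n * s by rw [show 2 * s * c = s * (2 * c) by ring, ← hc]; ring,
      Nat.add_mul_mod_self_left, Nat.mod_eq_of_lt (by omega)]
    simp only [even_two_mul, iff_true]
    omega
  · rw [show (2 * s + 1) * c = s + c + n * s by
        rw [show (2 * s + 1) * c = s * (2 * c) + c by ring, ← hc]; ring,
      Nat.add_mul_mod_self_left, Nat.mod_eq_of_lt (by omega)]
    simp only [Nat.not_even_bit1, iff_false]
    omega

theorem sum_range_ite_even {R : Type*} [CommRing R] (m : ℕ) :
    ∑ d ∈ range (2 * m + 1), (if Even d then (1 : R) else 0) = m + 1 := by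
  induction m with
  | zero => rw [mul_zero, zero_add, sum_range_one]; simp
  | succ m ih =>
    rw [show 2 * (m + 1) + 1 = 2 * m + 1 + 1 + 1 by ring, sum_range_succ, sum_range_succ, ih]
    simp [Nat.even_add_one]

section

variable (R : Type*) [CommRing R]

def bandMatrix (n c : ℕ) : Matrix (Fin n) (Fin n) R :=
  of fun i j => if ((j - i : Fin n) : ℕ) < c then 1 else 0

def parityMatrix (n : ℕ) : Matrix (Fin n) (Fin n) R :=
  of fun i j => if Even ((j - i : Fin n) : ℕ) then 1 else 0

def parityRowOp (n : ℕ) : Matrix (Fin n) (Fin n) R :=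
  of fun t x => (if x = t then 1 else 0) - if (x : ℕ) = t + 2 then 1 else 0

def parityColOp (n : ℕ) : Matrix (Fin n) (Fin n) R :=
  of fun u v => if (v : ℕ) + 1 = n then (if u = v then 1 else 0) else if u ≤ v then 1 else 0

def reducedParityMatrix (n : ℕ) : Matrix (Fin n) (Fin n) R :=
  parityRowOp R n * parityMatrix R n * parityColOp R n

variable {R} {n c : ℕ}

open Fin.CommRing in
theorem bandMatrix_submatrix_mul_natCast [NeZero n] (hc : n + 1 = 2 * c) :
    (bandMatrix R n c).submatrix (· * (c : Fin n)) (· * (c : Fin n)) = parityMatrix R n := by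
  ext t u
  simp only [submatrix_apply, bandMatrix, parityMatrix, of_apply, ← sub_mul, Fin.val_mul,
    Fin.val_natCast, Nat.mul_mod_mod, mul_mod_lt_iff_even hc (u - t).isLt]

theorem parityMatrix_apply_of_odd (hn : Odd n) (t u : Fin n) :
    parityMatrix R n t u = if (t ≤ u ↔ Even ((t : ℕ) + u)) then 1 else 0 := by
  have h2 : n % 2 = 1 := Nat.odd_iff.mp hn
  have hu := u.isLt
  simp only [parityMatrix, of_apply, Nat.even_iff, Fin.le_iff_val_le_val]
  rcases le_or_gt t u with h | h
  · rw [Fin.coe_sub_iff_le.mpr h]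
    congr 1
    exact propext (by omega)
  · rw [Fin.coe_sub_iff_lt.mpr h]
    congr 1
    exact propext (by omega)

theorem parityMatrix_apply_of_lt_of_odd (hn : Odd n) {t u : Fin n} (htu : t < u)
    (hodd : Odd ((t : ℕ) + u)) : parityMatrix R n t u = 0 := by
  rw [parityMatrix_apply_of_odd hn, if_neg (by simp [htu.le, Nat.not_even_iff_odd.mpr hodd])]

theorem sum_parityMatrix_row (hc : n + 1 = 2 * c) (t : Fin n) :
    ∑ u, parityMatrix R n t u = c := by
  obtain ⟨m, rfl⟩ : ∃ m, c = m + 1 := ⟨c - 1, by omega⟩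
  obtain rfl : n = 2 * m + 1 := by omega
  let evenIndicator (d : ℕ) : R := if Even d then 1 else 0
  rw [Fintype.sum_equiv (Equiv.subRight t) (parityMatrix R _ t) (evenIndicator ·) fun _ => rfl,
    Fin.sum_univ_eq_sum_range evenIndicator, sum_range_ite_even, Nat.cast_succ]

theorem det_parityRowOp : (parityRowOp R n).det = 1 := by
  rw [det_of_isUpperTriangular]
  · exact prod_eq_one fun t _ => by simp [parityRowOp]
  · intro t x (hxt : x < t)
    have hxt' : (x : ℕ) < t := hxt
    simp only [parityRowOp, of_apply, if_neg hxt.ne, if_neg (show (x : ℕ) ≠ t + 2 by omega),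
      sub_zero]

theorem det_parityColOp : (parityColOp R n).det = 1 := by
  rw [det_of_isUpperTriangular]
  · exact prod_eq_one fun t _ => by simp [parityColOp]
  · intro u v (hvu : v < u)
    have hvu' : (v : ℕ) < u := hvu
    simp only [parityColOp, of_apply, if_neg hvu.ne', if_neg (not_le.mpr hvu), ite_self]

theorem parityRowOp_mul_apply_of_lt (B : Matrix (Fin n) (Fin n) R) {t : Fin n}
    (ht : (t : ℕ) + 2 < n) (u : Fin n) :
    (parityRowOp R n * B) t u = B t u - B ⟨t + 2, ht⟩ u := by
  have hx (x : Fin n) : (x : ℕ) = t + 2 ↔ x = ⟨t + 2, ht⟩ := by simp [Fin.ext_iff]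
  simp only [mul_apply, parityRowOp, of_apply, hx, sub_mul, ite_mul, one_mul, zero_mul,
    sum_sub_distrib, sum_ite_eq', mem_univ, if_true]

theorem parityRowOp_mul_apply_of_le (B : Matrix (Fin n) (Fin n) R) {t : Fin n}
    (ht : n ≤ (t : ℕ) + 2) (u : Fin n) : (parityRowOp R n * B) t u = B t u := by
  have hx (x : Fin n) : (x : ℕ) ≠ t + 2 := by have := x.isLt; omega
  simp only [mul_apply, parityRowOp, of_apply, hx, if_false, sub_zero, ite_mul, one_mul,
    zero_mul, sum_ite_eq', mem_univ, if_true]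

theorem mul_parityColOp_apply_of_add_one_eq (B : Matrix (Fin n) (Fin n) R) (t : Fin n)
    {v : Fin n} (hv : (v : ℕ) + 1 = n) : (B * parityColOp R n) t v = B t v := by
  simp only [mul_apply, parityColOp, of_apply, hv, if_true, mul_ite, mul_one, mul_zero,
    sum_ite_eq', mem_univ]

theorem mul_parityColOp_apply_of_add_one_ne (B : Matrix (Fin n) (Fin n) R) (t : Fin n)
    {v : Fin n} (hv : (v : ℕ) + 1 ≠ n) :
    (B * parityColOp R n) t v = ∑ u with u ≤ v, B t u := by
  simp only [mul_apply, parityColOp, of_apply, hv, if_false, mul_ite, mul_one, mul_zero,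
    sum_filter]

theorem reducedParityMatrix_apply_of_add_two_lt (hn : Odd n) {t : Fin n}
    (ht : (t : ℕ) + 2 < n) (v : Fin n) :
    reducedParityMatrix R n t v = if v = t then 1 else 0 := by
  rw [reducedParityMatrix]
  have hrow (u : Fin n) : (parityRowOp R n * parityMatrix R n) t u =
      (if u = t then 1 else 0) - if u = ⟨t + 1, by omega⟩ then 1 else 0 := by
    rw [parityRowOp_mul_apply_of_lt _ ht, parityMatrix_apply_of_odd hn,
      parityMatrix_apply_of_odd hn]
    simp only [Fin.le_iff_val_le_val, Fin.ext_iff, Nat.even_iff, iff_iff_and_or_not_and_not]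
    split_ifs <;> first | (exfalso; omega) | simp
  simp only [mul_apply (M := _ * _), hrow, sub_mul, ite_mul, one_mul, zero_mul, sum_sub_distrib,
    sum_ite_eq', mem_univ, if_true]
  simp only [parityColOp, of_apply, Fin.ext_iff, Fin.le_iff_val_le_val]
  split_ifs <;> first | (exfalso; omega) | simp

theorem reducedParityMatrix_apply_of_add_two_eq (hn : Odd n) {t v : Fin n}
    (ht : (t : ℕ) + 2 = n) (htv : t < v) : reducedParityMatrix R n t v = 0 := by
  have htv' : (t : ℕ) < v := htv
  have hv : (v : ℕ) = t + 1 := by have := v.isLt; omega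
  rw [reducedParityMatrix, mul_parityColOp_apply_of_add_one_eq _ _ (by omega),
    parityRowOp_mul_apply_of_le _ ht.ge,
    parityMatrix_apply_of_lt_of_odd hn htv ⟨t, by omega⟩]

theorem reducedParityMatrix_apply_self_of_add_two_eq (hc : n + 1 = 2 * c) {t : Fin n}
    (ht : (t : ℕ) + 2 = n) : reducedParityMatrix R n t t = c := by
  have hn : Odd n := ⟨c - 1, by omega⟩
  rw [reducedParityMatrix, mul_parityColOp_apply_of_add_one_ne _ _ (by omega)]
  simp only [parityRowOp_mul_apply_of_le _ ht.ge]
  rw [sum_filter_of_ne, sum_parityMatrix_row hc]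
  intro u _ hu
  by_contra htu
  have htu' : (t : ℕ) < u := not_le.mp htu
  exact hu (parityMatrix_apply_of_lt_of_odd hn (not_le.mp htu) ⟨t, by have := u.isLt; omega⟩)

theorem reducedParityMatrix_apply_self_of_add_one_eq (hn : Odd n) {t : Fin n}
    (ht : (t : ℕ) + 1 = n) : reducedParityMatrix R n t t = 1 := by
  rw [reducedParityMatrix, mul_parityColOp_apply_of_add_one_eq _ _ ht,
    parityRowOp_mul_apply_of_le _ (by omega), parityMatrix_apply_of_odd hn]
  simp

theorem det_parityMatrix (hc : n + 1 = 2 * c) : (parityMatrix R n).det = c := by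
  have hn : Odd n := ⟨c - 1, by omega⟩
  obtain rfl | hn3 : n = 1 ∨ 3 ≤ n := by omega
  · obtain rfl : c = 1 := by omega
    simp [det_unique, parityMatrix]
  have hlower : (reducedParityMatrix R n).IsLowerTriangular := by
    intro t v (htv : t < v)
    have htv' : (t : ℕ) < v := htv
    obtain ht | ht : (t : ℕ) + 2 < n ∨ (t : ℕ) + 2 = n := by have := v.isLt; omega
    · rw [reducedParityMatrix_apply_of_add_two_lt hn ht, if_neg htv.ne']
    · exact reducedParityMatrix_apply_of_add_two_eq hn ht htv
  let s : Fin n := ⟨n - 2, by omega⟩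
  have hdiag (t : Fin n) : reducedParityMatrix R n t t = if t = s then (c : R) else 1 := by
    have hts : t = s ↔ (t : ℕ) + 2 = n := by simp only [s, Fin.ext_iff]; omega
    obtain ht | ht | ht : (t : ℕ) + 2 < n ∨ (t : ℕ) + 2 = n ∨ (t : ℕ) + 1 = n := by omega
    · rw [reducedParityMatrix_apply_of_add_two_lt hn ht, if_pos rfl, if_neg (by omega)]
    · rw [reducedParityMatrix_apply_self_of_add_two_eq hc ht, if_pos (hts.mpr ht)]
    · rw [reducedParityMatrix_apply_self_of_add_one_eq hn ht, if_neg (by omega)]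
  calc (parityMatrix R n).det
      = (reducedParityMatrix R n).det := by
        rw [reducedParityMatrix, det_mul, det_mul, det_parityRowOp, det_parityColOp, one_mul,
          mul_one]
    _ = c := by rw [det_of_isLowerTriangular _ hlower, prod_congr rfl fun t _ => hdiag t,
        prod_ite_eq' univ s, if_pos (mem_univ s)]

open Fin.CommRing in
theorem det_bandMatrix (hc : n + 1 = 2 * c) : (bandMatrix R n c).det = c := by
  have : NeZero n := ⟨by omega⟩
  have hunit : (c : Fin n) * 2 = 1 := by
    rw [← Nat.cast_ofNat, ← Nat.cast_mul, show c * 2 = n + 1 by omega, Nat.cast_add,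
      Fin.natCast_self, zero_add, Nat.cast_one]
  rw [← det_submatrix_equiv_self (Units.mulRight (Units.mkOfMulEqOne _ _ hunit)),
    show ⇑(Units.mulRight (Units.mkOfMulEqOne _ _ hunit)) = (· * (c : Fin n)) from rfl,
    bandMatrix_submatrix_mul_natCast hc, det_parityMatrix hc]

end

/-- the `(k-1) × (k-1)` circulant 0-1 matrix over `ℚ` whose `(i,j)` entry is
`1` exactly when `(j - i) mod (k-1) ∈ {0, 1, …, k/2 - 1}` has rank `k-1` and
determinant `k/2`. -/
theorem statement3 (k : ℕ) (hk : 4 ≤ k) (hke : Even k)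
    (M : Matrix (Fin (k - 1)) (Fin (k - 1)) ℚ)
    (hM : ∀ i j : Fin (k - 1),
      M i j = if ((j : ℕ) + (k - 1) - (i : ℕ)) % (k - 1) < k / 2 then 1 else 0) :
    M.rank = k - 1 ∧ M.det = (k / 2 : ℕ) := by
  have hc : k - 1 + 1 = 2 * (k / 2) := by obtain ⟨m, rfl⟩ := hke; omega
  have hband : M = bandMatrix ℚ (k - 1) (k / 2) := by
    ext i j
    rw [hM, bandMatrix, of_apply, Fin.val_sub,
      show (j : ℕ) + (k - 1) - i = k - 1 - i + j by omega]
  have hdet : M.det = (k / 2 : ℕ) := hband ▸ det_bandMatrix hc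
  have hunit : IsUnit M.det := isUnit_iff_ne_zero.mpr (by rw [hdet]; exact_mod_cast (by omega))
  exact ⟨by rw [rank_of_isUnit M ((isUnit_iff_isUnit_det M).mpr hunit), Fintype.card_fin], hdet⟩

end CoverSmallCuts
end

section
/- For every links system L and every j ∈ {1,…,k−1}: the cut δ_L(Q_j) contains no link of P_k; for each i ∈ {1,…,k−1}, δ_L(Q_j) contains exactly two links of P_i if P_i has an internal node in Q_j and contains no link of P_i otherwise; consequently |δ_L(Q_j)| = k. -/
open Finset

namespace CoverSmallCuts

/-! Each path `P_i` visits its nodes in increasing order from `1` to `n`, and `Q_j` is an interval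
avoiding `1` and `n`. So the positions of the nodes of `P_i` lying in `Q_j` form a block of
consecutive positions, and `P_i` crosses `Q_j` exactly at the link entering and the link leaving
that block: twice if `P_i` meets `Q_j`, never otherwise. A link crossing `Q_j` has an endpoint in
`Q_j`, which is an internal node of every path containing the link, so no two paths share one; and
`P_k = {{1, n}}` does not cross `Q_j`. As exactly `k/2` of the paths meet `Q_j`,
`|δ_L(Q_j)| = 2 · k/2 = k`. -/

section

open scoped Classical

theorem mk_mem_deltaL_iff {F : Finset (Sym2 ℕ)} {S : Finset ℕ} {x y : ℕ} :
    s(x, y) ∈ deltaL F S ↔ s(x, y) ∈ F ∧ ¬(x ∈ S ↔ y ∈ S) := by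
  simp only [deltaL, mem_filter, Sym2.eq_iff]
  refine and_congr_right fun _ => ⟨?_, fun h => ?_⟩
  · rintro ⟨a, b, (⟨rfl, rfl⟩ | ⟨rfl, rfl⟩), ha, hb⟩ <;> tauto
  · by_cases hx : x ∈ S
    · exact ⟨x, y, Or.inl ⟨rfl, rfl⟩, hx, by tauto⟩
    · exact ⟨y, x, Or.inr ⟨rfl, rfl⟩, by tauto, hx⟩

theorem deltaL_inter_of_subset {F G : Finset (Sym2 ℕ)} (h : G ⊆ F) (S : Finset ℕ) :
    deltaL F S ∩ G = deltaL G S := by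
  ext e
  simp only [deltaL, mem_inter, mem_filter]
  exact ⟨fun ⟨⟨_, he⟩, hG⟩ => ⟨hG, he⟩, fun ⟨hG, he⟩ => ⟨⟨h hG, he⟩, hG⟩⟩

theorem deltaL_biUnion {ι : Type*} (s : Finset ι) (F : ι → Finset (Sym2 ℕ)) (S : Finset ℕ) :
    deltaL (s.biUnion F) S = s.biUnion fun i => deltaL (F i) S :=
  filter_biUnion _ _ _

theorem deltaL_image_mk {ι : Type*} (s : Finset ι) (u v : ι → ℕ) (S : Finset ℕ) :
    deltaL (s.image fun t => s(u t, v t)) S =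
      (s.filter fun t => ¬(u t ∈ S ↔ v t ∈ S)).image fun t => s(u t, v t) := by
  ext e
  simp only [mem_image, mem_filter]
  constructor
  · intro he
    obtain ⟨t, ht, rfl⟩ := mem_image.1 (mem_filter.1 he).1
    exact ⟨t, ⟨ht, (mk_mem_deltaL_iff.1 he).2⟩, rfl⟩
  · rintro ⟨t, ⟨ht, hcross⟩, rfl⟩
    exact mk_mem_deltaL_iff.2 ⟨mem_image_of_mem _ ht, hcross⟩

theorem exists_threshold {P : ℕ → Prop} {N : ℕ} (hP : ∀ s t, s ≤ t → t ≤ N → P s → P t)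
    (hN : P N) : ∃ a ≤ N, ∀ t ≤ N, P t ↔ a ≤ t :=
  ⟨Nat.find ⟨N, hN⟩, Nat.find_min' _ hN, fun _ ht =>
    ⟨fun h => Nat.find_min' _ h, fun h => hP _ _ h ht (Nat.find_spec ⟨N, hN⟩)⟩⟩

theorem exists_Ico_of_strictMonoOn {f : ℕ → ℕ} {N lo hi : ℕ}
    (hf : StrictMonoOn f (Set.Iic N)) (hN : hi < f N) :
    ∃ a ≤ N, ∃ b ≤ N, ∀ t ≤ N, f t ∈ Icc lo hi ↔ a ≤ t ∧ t < b := by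
  have hle : ∀ s t, s ≤ t → t ≤ N → f s ≤ f t := fun s t hst htN =>
    hf.monotoneOn (Set.mem_Iic.2 (hst.trans htN)) (Set.mem_Iic.2 htN) hst
  -- the disjunct `t = N` makes the first threshold exist even when `lo > f N`
  obtain ⟨a, haN, ha⟩ := exists_threshold (P := fun t => lo ≤ f t ∨ t = N)
    (fun s t hst htN => Or.imp (fun h => h.trans (hle s t hst htN)) (by omega)) (Or.inr rfl)
  obtain ⟨b, hbN, hb⟩ := exists_threshold (P := fun t => hi < f t)
    (fun s t hst htN h => h.trans_le (hle s t hst htN)) hN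
  refine ⟨a, haN, b, hbN, fun t ht => ?_⟩
  have := ha t ht
  have := hb t ht
  have := hb N le_rfl
  simp only [mem_Icc]
  omega

theorem card_deltaL_image_mk_Icc {f : ℕ → ℕ} {m lo hi : ℕ}
    (hf : ∀ t ≤ m, f t < f (t + 1)) (h0 : f 0 < lo) (hm : hi < f (m + 1)) :
    #(deltaL ((Icc 0 m).image fun t => s(f t, f (t + 1))) (Icc lo hi)) =
      if ∃ t ∈ Icc 1 m, f t ∈ Icc lo hi then 2 else 0 := by
  have hmono : StrictMonoOn f (Set.Iic (m + 1)) :=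
    strictMonoOn_Iic_of_lt_succ fun t ht => by simpa using hf t (by omega)
  have hinj : Set.InjOn (fun t => s(f t, f (t + 1))) (Icc 0 m : Set ℕ) := by
    intro s hs t ht hst
    simp only [coe_Icc, Set.mem_Icc] at hs ht
    have hinjf := hmono.injOn
    rcases Sym2.eq_iff.1 hst with ⟨h, -⟩ | ⟨h, h'⟩
    · exact hinjf (Set.mem_Iic.2 (by omega)) (Set.mem_Iic.2 (by omega)) h
    · have := hinjf (Set.mem_Iic.2 (by omega)) (Set.mem_Iic.2 (by omega)) h
      have := hinjf (Set.mem_Iic.2 (by omega)) (Set.mem_Iic.2 (by omega)) h'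
      omega
  obtain ⟨a, haN, b, hbN, hS⟩ := exists_Ico_of_strictMonoOn (lo := lo) hmono hm
  have h0S : ¬(a ≤ 0 ∧ 0 < b) := by
    rw [← hS 0 (by omega), mem_Icc]
    omega
  have hmeets : (∃ t ∈ Icc 1 m, f t ∈ Icc lo hi) ↔ a < b := by
    constructor
    · rintro ⟨t, ht, hft⟩
      rw [mem_Icc] at ht
      rw [hS t (by omega)] at hft
      omega
    · intro hab
      refine ⟨a, ?_, (hS a (by omega)).2 ⟨le_rfl, hab⟩⟩
      rw [mem_Icc]
      omega
  have hcross : ∀ t ∈ Icc 0 m, ¬(f t ∈ Icc lo hi ↔ f (t + 1) ∈ Icc lo hi) ↔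
      ¬(a ≤ t ∧ t < b ↔ a ≤ t + 1 ∧ t + 1 < b) := fun t ht => by
    rw [mem_Icc] at ht
    rw [hS t (by omega), hS (t + 1) (by omega)]
  rw [deltaL_image_mk, card_image_of_injOn (hinj.mono (coe_subset.2 (filter_subset _ _))),
    filter_congr hcross, hmeets]
  split_ifs with hab
  · -- the entering link `a - 1` and the leaving link `b - 1`
    have : (Icc 0 m).filter (fun t => ¬(a ≤ t ∧ t < b ↔ a ≤ t + 1 ∧ t + 1 < b)) =
        {a - 1, b - 1} := by
      ext t
      simp only [mem_filter, mem_Icc, mem_insert, mem_singleton]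
      omega
    rw [this, card_pair (by omega)]
  · rw [card_eq_zero, filter_eq_empty_iff]
    intro t ht
    rw [mem_Icc] at ht
    omega

theorem one_add_mul_half_lt_nn {k j : ℕ} (hj : j ≤ k - 1) : 1 + j * (k / 2) < nn k := by
  have hhalf : (k - 1) * (k / 2) ≤ k * (k - 1) / 2 := by
    rw [Nat.le_div_iff_mul_le two_pos, Nat.mul_assoc, Nat.mul_comm k]
    exact Nat.mul_le_mul_left _ (Nat.div_mul_le_self k 2)
  have := Nat.mul_le_mul_right (k / 2) hj
  unfold nn
  omega

theorem Qset_subset_Icc {k j : ℕ} (hj : j ≤ k - 1) : Qset k j ⊆ Icc 2 (nn k - 1) := by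
  intro v hv
  have := one_add_mul_half_lt_nn hj
  simp only [Qset, mem_Icc] at hv ⊢
  omega

theorem card_filter_meetsQ_condition {k : ℕ} (hke : Even k) {j : ℕ} (hj : j ∈ Icc 1 (k - 1)) :
    #{i ∈ Icc 1 (k - 1) |
      (i ≤ j ∧ j ≤ min (i + k / 2 - 1) (k - 1)) ∨ (j < i ∧ j ≤ i - k / 2)} = k / 2 := by
  obtain ⟨h, rfl⟩ := hke
  rw [mem_Icc] at hj
  have hunion : {i ∈ Icc 1 (h + h - 1) |
      (i ≤ j ∧ j ≤ min (i + (h + h) / 2 - 1) (h + h - 1)) ∨ (j < i ∧ j ≤ i - (h + h) / 2)} =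
      Icc (max 1 (j + 1 - h)) j ∪ Icc (j + h) (h + h - 1) := by
    ext i
    simp only [mem_filter, mem_union, mem_Icc]
    omega
  rw [hunion, card_union_of_disjoint (disjoint_left.2 fun i hi hi' => by
    simp only [mem_Icc] at hi hi'; omega), Nat.card_Icc, Nat.card_Icc]
  omega

namespace LinksSystem

variable {k : ℕ} (LS : LinksSystem k)

theorem sum_ite_meetsQ (hke : Even k) {j : ℕ} (hj : j ∈ Icc 1 (k - 1)) :
    (∑ i ∈ Icc 1 (k - 1), if ∃ t ∈ Icc 1 (k / 2), LS.node i t ∈ Qset k j then 2 else 0) = k := by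
  have hcond : ∀ i ∈ Icc 1 (k - 1),
      (if ∃ t ∈ Icc 1 (k / 2), LS.node i t ∈ Qset k j then 2 else 0) =
        if (i ≤ j ∧ j ≤ min (i + k / 2 - 1) (k - 1)) ∨ (j < i ∧ j ≤ i - k / 2) then 2 else 0 :=
    fun i hi => by
      by_cases h : ∃ t ∈ Icc 1 (k / 2), LS.node i t ∈ Qset k j
      · rw [if_pos h, if_pos ((LS.meetsQ i hi j hj).1 h)]
      · rw [if_neg h, if_neg (mt (LS.meetsQ i hi j hj).2 h)]
  rw [sum_congr rfl hcond, ← sum_filter, sum_const, smul_eq_mul,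
    card_filter_meetsQ_condition hke hj]
  exact Nat.div_two_mul_two_of_even hke

theorem deltaL_P_self_eq_empty {j : ℕ} (hj : j ≤ k - 1) : deltaL (LS.P k) (Qset k j) = ∅ := by
  have hQ := Qset_subset_Icc hj
  have h1 : 1 ∉ Qset k j := fun h => by have := mem_Icc.1 (hQ h); omega
  have hn : nn k ∉ Qset k j := fun h => by have := mem_Icc.1 (hQ h); omega
  rw [eq_empty_iff_forall_notMem]
  intro e he
  obtain rfl : e = s(1, nn k) := by simpa [P] using (mem_filter.1 he).1
  exact (mk_mem_deltaL_iff.1 he).2 (iff_of_false h1 hn)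

theorem card_deltaL_P {i j : ℕ} (hi : i ∈ Icc 1 (k - 1)) (hj : j ≤ k - 1) :
    #(deltaL (LS.P i) (Qset k j)) =
      if ∃ t ∈ Icc 1 (k / 2), LS.node i t ∈ Qset k j then 2 else 0 := by
  have hik : i ≠ k := by rw [mem_Icc] at hi; omega
  rw [P, if_neg hik]
  refine card_deltaL_image_mk_Icc (LS.node_mono i hi) ?_ ?_
  · rw [LS.node_first i hi]
    omega
  · rw [LS.node_last i hi]
    exact one_add_mul_half_lt_nn hj

theorem exists_node_eq_of_mem_P {i : ℕ} (hi : i ∈ Icc 1 (k - 1)) {e : Sym2 ℕ}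
    (he : e ∈ LS.P i) {v : ℕ} (hve : v ∈ e) (hv : v ∈ Icc 2 (nn k - 1)) :
    ∃ t ∈ Icc 1 (k / 2), LS.node i t = v := by
  have hik : i ≠ k := by rw [mem_Icc] at hi; omega
  simp only [P, if_neg hik, mem_image, mem_Icc] at he
  obtain ⟨t, ht, rfl⟩ := he
  have h0 := LS.node_first i hi
  have hlast := LS.node_last i hi
  rw [mem_Icc] at hv
  rcases Sym2.mem_iff.1 hve with rfl | rfl
  · refine ⟨t, mem_Icc.2 ⟨?_, ht.2⟩, rfl⟩
    by_contra! h
    obtain rfl : t = 0 := by omega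
    omega
  · refine ⟨t + 1, mem_Icc.2 ⟨by omega, ?_⟩, rfl⟩
    by_contra! h
    rw [show t + 1 = k / 2 + 1 by omega] at hv
    omega

theorem pairwiseDisjoint_deltaL_P {j : ℕ} (hj : j ≤ k - 1) :
    (Icc 1 k : Set ℕ).PairwiseDisjoint fun i => deltaL (LS.P i) (Qset k j) := by
  have hbelow : ∀ i ∈ Icc 1 k, i ≠ k → i ∈ Icc 1 (k - 1) := fun i hi hik => by
    simp only [mem_Icc] at hi ⊢
    omega
  intro a ha b hb hab
  rw [Function.onFun, disjoint_left]
  intro e hea heb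
  by_cases hak : a = k
  · rw [hak, LS.deltaL_P_self_eq_empty hj] at hea
    exact notMem_empty e hea
  by_cases hbk : b = k
  · rw [hbk, LS.deltaL_P_self_eq_empty hj] at heb
    exact notMem_empty e heb
  -- the endpoint of `e` in `Q_j` is an internal node of both `P_a` and `P_b`
  obtain ⟨x, y, rfl, hx, -⟩ := (mem_filter.1 hea).2
  have hxv := Qset_subset_Icc hj hx
  exact hab <| (LS.cover x hxv).unique
    ⟨hbelow a ha hak, LS.exists_node_eq_of_mem_P (hbelow a ha hak) (mem_filter.1 hea).1
      (Sym2.mem_mk_left x y) hxv⟩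
    ⟨hbelow b hb hbk, LS.exists_node_eq_of_mem_P (hbelow b hb hbk) (mem_filter.1 heb).1
      (Sym2.mem_mk_left x y) hxv⟩

end LinksSystem

end

theorem statement5_general (k : ℕ) (hke : Even k) (LS : LinksSystem k) :
    ∀ j ∈ Finset.Icc 1 (k - 1),
      (deltaL LS.links (Qset k j) ∩ LS.P k = ∅) ∧
      (∀ i ∈ Finset.Icc 1 (k - 1),
        ((∃ t ∈ Finset.Icc 1 (k / 2), LS.node i t ∈ Qset k j) →
            (deltaL LS.links (Qset k j) ∩ LS.P i).card = 2) ∧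
        (¬ (∃ t ∈ Finset.Icc 1 (k / 2), LS.node i t ∈ Qset k j) →
            (deltaL LS.links (Qset k j) ∩ LS.P i).card = 0)) ∧
      (deltaL LS.links (Qset k j)).card = k := by
  intro j hj
  have hjk : j ≤ k - 1 := (mem_Icc.1 hj).2
  have hinter : ∀ i ∈ Icc 1 k, deltaL LS.links (Qset k j) ∩ LS.P i = deltaL (LS.P i) (Qset k j) :=
    fun i hi => deltaL_inter_of_subset (subset_biUnion_of_mem LS.P hi) _
  have hk : 1 ≤ k := by rw [mem_Icc] at hj; omega
  refine ⟨?_, fun i hi => ?_, ?_⟩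
  · rw [hinter k (right_mem_Icc.2 hk), LS.deltaL_P_self_eq_empty hjk]
  · rw [hinter i (Icc_subset_Icc_right (Nat.sub_le k 1) hi), LS.card_deltaL_P hi hjk]
    exact ⟨fun h => if_pos h, fun h => if_neg h⟩
  · have hIcc : Icc 1 k = insert k (Icc 1 (k - 1)) := by
      ext i
      simp only [mem_insert, mem_Icc]
      omega
    rw [LinksSystem.links, deltaL_biUnion, card_biUnion (LS.pairwiseDisjoint_deltaL_P hjk), hIcc,
      sum_insert (by rw [mem_Icc]; omega), LS.deltaL_P_self_eq_empty hjk, card_empty, zero_add,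
      sum_congr rfl fun i hi => LS.card_deltaL_P hi hjk]
    exact LS.sum_ite_meetsQ hke hj

/-- for every links system `L` and every `j ∈ {1, …, k-1}`: `δ_L(Q_j)`
contains no link of `P_k`; for each `i ∈ {1, …, k-1}`, `δ_L(Q_j)` contains exactly two
links of `P_i` if `P_i` has an internal node in `Q_j`, and no link of `P_i` otherwise;
consequently `|δ_L(Q_j)| = k`. -/
theorem statement5 (k : ℕ) (hk : 4 ≤ k) (hke : Even k) (LS : LinksSystem k) :
    ∀ j ∈ Finset.Icc 1 (k - 1),
      (deltaL LS.links (Qset k j) ∩ LS.P k = ∅) ∧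
      (∀ i ∈ Finset.Icc 1 (k - 1),
        ((∃ t ∈ Finset.Icc 1 (k / 2), LS.node i t ∈ Qset k j) →
            (deltaL LS.links (Qset k j) ∩ LS.P i).card = 2) ∧
        (¬ (∃ t ∈ Finset.Icc 1 (k / 2), LS.node i t ∈ Qset k j) →
            (deltaL LS.links (Qset k j) ∩ LS.P i).card = 0)) ∧
      (deltaL LS.links (Qset k j)).card = k :=
  statement5_general k hke LS

end CoverSmallCuts
end

section
/- For every links system L with links indexed as described: let L' be a set of exactly k/2 links with ℓ_k ∉ L' that is contained in some nested cut, let h be the smallest index with L' ⊆ δ_L(N_h), and suppose h ≥ 2. Let L̄ = δ_L(N_h) ∖ L' and let g be the smallest index with L̄ ⊆ δ_L(N_g). Then g < h, and the set L'' = δ_L(N_g) ∖ L̄ consists of exactly k/2 links, does not contain ℓ_k, satisfies the vector identity χ^{L''} = χ^{L'} − χ^{δ_L(N_h)} + χ^{δ_L(N_g)} in ℝ^L, and satisfies φ(L'') = φ(L'). -/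
open Finset

namespace CoverSmallCuts

/-! Every nested cut `δ_L(N_i)` with `1 ≤ i < n` contains exactly one link of each class, since
the paths have increasing node indices; hence `φ` is a bijection from it onto `{1, …, k}`.
Minimality of `h` gives a link of `L'` whose lower endpoint is `h`, and as `h` is an internal node
of a single path this is the only link of `δ_L(N_h)` starting at `h`. So `L̄ ⊆ δ_L(N_{h-1})` and
`g < h`, while `ℓ_k = {1, n} ∈ L̄` forces `g ≥ 1`. The remaining claims are then an exchange
argument between the two cuts `δ_L(N_h) ⊇ L'` and `δ_L(N_g) ⊇ L̄`, on both of which `φ` is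
injective with the same image. -/

lemma Sym2.mk_eq_mk_iff_of_lt {α : Type*} [LinearOrder α] {a b c d : α} (hab : a < b)
    (hcd : c < d) : s(a, b) = s(c, d) ↔ a = c ∧ b = d := by
  refine ⟨fun h => ?_, fun ⟨hac, hbd⟩ => hac ▸ hbd ▸ rfl⟩
  rcases Sym2.eq_iff.1 h with h | ⟨rfl, rfl⟩
  · exact h
  · exact (lt_asymm hab hcd).elim

lemma exists_le_lt_succ {f : ℕ → ℕ} {i m : ℕ} (h0 : f 0 ≤ i) (hm : i < f m) :
    ∃ t < m, f t ≤ i ∧ i < f (t + 1) := by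
  induction m with
  | zero => omega
  | succ m ih =>
    by_cases hi : i < f m
    · obtain ⟨t, htm, ht⟩ := ih hi
      exact ⟨t, by omega, ht⟩
    · exact ⟨m, by omega, by omega, hm⟩

lemma MonotoneOn.eq_of_le_lt_succ {f : ℕ → ℕ} {i m t₁ t₂ : ℕ}
    (hf : MonotoneOn f (Set.Iic (m + 1))) (ht₁ : t₁ ≤ m) (ht₂ : t₂ ≤ m)
    (h₁ : f t₁ ≤ i ∧ i < f (t₁ + 1)) (h₂ : f t₂ ≤ i ∧ i < f (t₂ + 1)) : t₁ = t₂ := by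
  rcases lt_trichotomy t₁ t₂ with h | h | h
  · have := hf (show t₁ + 1 ∈ Set.Iic (m + 1) by simp; omega)
      (show t₂ ∈ Set.Iic (m + 1) by simp; omega) h
    omega
  · exact h
  · have := hf (show t₂ + 1 ∈ Set.Iic (m + 1) by simp; omega)
      (show t₁ ∈ Set.Iic (m + 1) by simp; omega) h
    omega

lemma mem_deltaL {F : Finset (Sym2 ℕ)} {S : Finset ℕ} {e : Sym2 ℕ} :
    e ∈ deltaL F S ↔ e ∈ F ∧ ∃ a b, e = s(a, b) ∧ a ∈ S ∧ b ∉ S := by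
  classical
  simp [deltaL]

lemma deltaL_subset (F : Finset (Sym2 ℕ)) (S : Finset ℕ) : deltaL F S ⊆ F :=
  fun _ he => (mem_deltaL.1 he).1

lemma mk_mem_deltaL_Nset_iff {F : Finset (Sym2 ℕ)} {i x y : ℕ} (hx : 1 ≤ x) (hxy : x < y) :
    s(x, y) ∈ deltaL F (Nset i) ↔ s(x, y) ∈ F ∧ x ≤ i ∧ i < y := by
  simp only [mem_deltaL, Nset, mem_Icc]
  refine ⟨fun ⟨hF, a, b, hab, ha, hb⟩ => ⟨hF, ?_⟩, fun ⟨hF, hxi, hiy⟩ => ⟨hF, x, y, rfl, ?_⟩⟩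
  · rcases Sym2.eq_iff.1 hab with ⟨rfl, rfl⟩ | ⟨rfl, rfl⟩ <;> omega
  · omega

lemma one_lt_nn (k : ℕ) : 1 < nn k := by
  unfold nn; omega

section Exchange

variable {α β : Type*} [DecidableEq α] [DecidableEq β] {φ : α → β} {A G H : Finset α}

lemma card_sdiff_sdiff_of_image_eq (hAH : A ⊆ H) (hHG : H \ A ⊆ G)
    (hG : Set.InjOn φ G) (hH : Set.InjOn φ H) (himg : G.image φ = H.image φ) :
    (G \ (H \ A)).card = A.card := by
  have hcard : G.card = H.card := by
    rw [← card_image_of_injOn hG, ← card_image_of_injOn hH, himg]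
  have := card_le_card hAH
  rw [card_sdiff_of_subset hHG, card_sdiff_of_subset hAH, hcard]
  omega

lemma image_sdiff_sdiff_of_image_eq (hAH : A ⊆ H) (hHG : H \ A ⊆ G)
    (hG : Set.InjOn φ G) (hH : Set.InjOn φ H) (himg : G.image φ = H.image φ) :
    (G \ (H \ A)).image φ = A.image φ := by
  rw [image_sdiff_of_injOn hG hHG, himg, ← image_sdiff_of_injOn hH sdiff_subset,
    Finset.sdiff_sdiff_eq_self hAH]

end Exchange

lemma chi_sdiff_sdiff {A G H : Finset (Sym2 ℕ)} (hAH : A ⊆ H) (hHG : H \ A ⊆ G) (e : Sym2 ℕ) :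
    chi (G \ (H \ A)) e = chi A e - chi H e + chi G e := by
  have hA := @hAH e
  have hG := @hHG e
  simp only [chi, mem_sdiff] at hG ⊢
  by_cases hAe : e ∈ A <;> by_cases hHe : e ∈ H <;> by_cases hGe : e ∈ G <;> simp_all

namespace LinksSystem

variable {k : ℕ} (LS : LinksSystem k)

lemma node_strictMonoOn {j : ℕ} (hj : j ∈ Icc 1 (k - 1)) :
    StrictMonoOn (LS.node j) (Set.Iic (k / 2 + 1)) :=
  strictMonoOn_Iic_of_lt_succ fun t ht => by
    simpa [Order.succ_eq_add_one] using LS.node_mono j hj t (by omega)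

lemma node_mem_Icc {j t : ℕ} (hj : j ∈ Icc 1 (k - 1)) (ht : t ≤ k / 2 + 1) :
    1 ≤ LS.node j t ∧ LS.node j t ≤ nn k := by
  have hmono := (LS.node_strictMonoOn hj).monotoneOn
  have h0 := hmono (by simp) ht (Nat.zero_le t)
  have h1 := hmono ht (by simp) ht
  rw [LS.node_first j hj] at h0
  rw [LS.node_last j hj] at h1
  exact ⟨h0, h1⟩

lemma P_self : LS.P k = {s(1, nn k)} := if_pos rfl

lemma mem_P_iff {j : ℕ} (hj : j ∈ Icc 1 (k - 1)) {e : Sym2 ℕ} :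
    e ∈ LS.P j ↔ ∃ t ≤ k / 2, e = s(LS.node j t, LS.node j (t + 1)) := by
  rw [P, if_neg (by simp at hj; omega)]
  simp [eq_comm]

lemma mk_one_nn_mem_links (hk : 1 ≤ k) : s(1, nn k) ∈ LS.links :=
  mem_biUnion.2 ⟨k, by simp [hk], by simp [P_self]⟩

lemma mk_one_nn_mem_deltaL_iff (hk : 1 ≤ k) {i : ℕ} :
    s(1, nn k) ∈ deltaL LS.links (Nset i) ↔ 1 ≤ i ∧ i < nn k := by
  simp [mk_mem_deltaL_Nset_iff le_rfl (one_lt_nn k), LS.mk_one_nn_mem_links hk]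

lemma exists_eq_mk_of_mem_links {e : Sym2 ℕ} (he : e ∈ LS.links) :
    ∃ x y, e = s(x, y) ∧ 1 ≤ x ∧ x < y ∧ y ≤ nn k := by
  obtain ⟨j, hj, hej⟩ := mem_biUnion.1 he
  by_cases hjk : j = k
  · rw [hjk, P_self, mem_singleton] at hej
    exact ⟨1, nn k, hej, le_rfl, one_lt_nn _, le_rfl⟩
  · have hj' : j ∈ Icc 1 (k - 1) := by simp at hj ⊢; omega
    obtain ⟨t, ht, rfl⟩ := (LS.mem_P_iff hj').1 hej
    exact ⟨_, _, rfl, (LS.node_mem_Icc hj' (by omega)).1, LS.node_mono j hj' t ht,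
      (LS.node_mem_Icc hj' (by omega)).2⟩

lemma exists_eq_mk_of_mem_deltaL {i : ℕ} {e : Sym2 ℕ} (he : e ∈ deltaL LS.links (Nset i)) :
    ∃ x y, e = s(x, y) ∧ s(x, y) ∈ LS.links ∧ 1 ≤ x ∧ x ≤ i ∧ i < y ∧ y ≤ nn k := by
  have hl := deltaL_subset _ _ he
  obtain ⟨x, y, rfl, hx, hxy, hy⟩ := LS.exists_eq_mk_of_mem_links hl
  obtain ⟨-, hxi, hiy⟩ := (mk_mem_deltaL_Nset_iff hx hxy).1 he
  exact ⟨x, y, rfl, hl, hx, hxi, hiy, hy⟩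

lemma lt_nn_of_mem_deltaL {i : ℕ} {e : Sym2 ℕ} (he : e ∈ deltaL LS.links (Nset i)) : i < nn k := by
  obtain ⟨x, y, -, -, -, -, hiy, hy⟩ := LS.exists_eq_mk_of_mem_deltaL he
  omega

lemma exists_mem_P_inter_deltaL {i j : ℕ} (hi : 1 ≤ i) (hin : i < nn k) (hj : j ∈ Icc 1 k) :
    ∃ e ∈ LS.P j, e ∈ deltaL LS.links (Nset i) := by
  by_cases hjk : j = k
  · subst hjk
    exact ⟨_, by simp [P_self], (LS.mk_one_nn_mem_deltaL_iff (by simp at hj; omega)).2 ⟨hi, hin⟩⟩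
  have hj' : j ∈ Icc 1 (k - 1) := by simp at hj ⊢; omega
  obtain ⟨t, ht, hcross⟩ := exists_le_lt_succ (f := LS.node j) (i := i) (m := k / 2 + 1)
    (by rw [LS.node_first j hj']; exact hi) (by rw [LS.node_last j hj']; exact hin)
  have heP : s(LS.node j t, LS.node j (t + 1)) ∈ LS.P j := (LS.mem_P_iff hj').2 ⟨t, by omega, rfl⟩
  refine ⟨_, heP, (mk_mem_deltaL_Nset_iff (LS.node_mem_Icc hj' (by omega)).1
    (LS.node_mono j hj' t (by omega))).2 ⟨mem_biUnion.2 ⟨j, hj, heP⟩, hcross⟩⟩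

lemma eq_of_mem_P_inter_deltaL {i j : ℕ} (hj : j ∈ Icc 1 k) {e₁ e₂ : Sym2 ℕ}
    (he₁ : e₁ ∈ LS.P j) (he₂ : e₂ ∈ LS.P j)
    (hδ₁ : e₁ ∈ deltaL LS.links (Nset i)) (hδ₂ : e₂ ∈ deltaL LS.links (Nset i)) : e₁ = e₂ := by
  by_cases hjk : j = k
  · subst hjk
    rw [P_self, mem_singleton] at he₁ he₂
    rw [he₁, he₂]
  have hj' : j ∈ Icc 1 (k - 1) := by simp at hj ⊢; omega
  obtain ⟨t₁, ht₁, rfl⟩ := (LS.mem_P_iff hj').1 he₁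
  obtain ⟨t₂, ht₂, rfl⟩ := (LS.mem_P_iff hj').1 he₂
  have hcross : ∀ t ≤ k / 2, s(LS.node j t, LS.node j (t + 1)) ∈ deltaL LS.links (Nset i) →
      LS.node j t ≤ i ∧ i < LS.node j (t + 1) := fun t ht hδ =>
    ((mk_mem_deltaL_Nset_iff (LS.node_mem_Icc hj' (by omega)).1
      (LS.node_mono j hj' t ht)).1 hδ).2
  rw [MonotoneOn.eq_of_le_lt_succ (LS.node_strictMonoOn hj').monotoneOn ht₁ ht₂ (hcross t₁ ht₁ hδ₁)
    (hcross t₂ ht₂ hδ₂)]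

lemma injOn_deltaL {φ : Sym2 ℕ → ℕ} (hφ : ∀ i ∈ Icc 1 k, ∀ e ∈ LS.P i, φ e = i) (i : ℕ) :
    Set.InjOn φ (deltaL LS.links (Nset i)) := by
  intro e₁ hδ₁ e₂ hδ₂ hφe
  obtain ⟨j₁, hj₁, he₁⟩ := mem_biUnion.1 (deltaL_subset _ _ hδ₁)
  obtain ⟨j₂, hj₂, he₂⟩ := mem_biUnion.1 (deltaL_subset _ _ hδ₂)
  rw [hφ j₁ hj₁ e₁ he₁, hφ j₂ hj₂ e₂ he₂] at hφe
  subst hφe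
  exact LS.eq_of_mem_P_inter_deltaL hj₁ he₁ he₂ hδ₁ hδ₂

lemma image_deltaL {φ : Sym2 ℕ → ℕ} (hφ : ∀ i ∈ Icc 1 k, ∀ e ∈ LS.P i, φ e = i) {i : ℕ}
    (hi : 1 ≤ i) (hin : i < nn k) : (deltaL LS.links (Nset i)).image φ = Icc 1 k := by
  ext j
  simp only [mem_image]
  constructor
  · rintro ⟨e, hδ, rfl⟩
    obtain ⟨j, hj, he⟩ := mem_biUnion.1 (deltaL_subset _ _ hδ)
    rwa [hφ j hj e he]
  · intro hj
    obtain ⟨e, he, hδ⟩ := LS.exists_mem_P_inter_deltaL hi hin hj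
    exact ⟨e, hδ, hφ j hj e he⟩

lemma exists_node_eq_of_mk_mem_links {v y : ℕ} (hv : 2 ≤ v) (hvy : v < y)
    (he : s(v, y) ∈ LS.links) :
    ∃ j ∈ Icc 1 (k - 1), ∃ t ∈ Icc 1 (k / 2), LS.node j t = v ∧ LS.node j (t + 1) = y := by
  obtain ⟨j, hj, hej⟩ := mem_biUnion.1 he
  by_cases hjk : j = k
  · rw [hjk, P_self, mem_singleton, Sym2.mk_eq_mk_iff_of_lt hvy (one_lt_nn k)] at hej
    omega
  have hj' : j ∈ Icc 1 (k - 1) := by simp at hj ⊢; omega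
  obtain ⟨t, ht, hvt⟩ := (LS.mem_P_iff hj').1 hej
  obtain ⟨hv', hy'⟩ := (Sym2.mk_eq_mk_iff_of_lt hvy (LS.node_mono j hj' t ht)).1 hvt
  have ht0 : t ≠ 0 := by
    rintro rfl
    rw [LS.node_first j hj'] at hv'
    omega
  exact ⟨j, hj', t, by simp; omega, hv'.symm, hy'.symm⟩

lemma eq_of_mk_mem_links {v y y' : ℕ} (hv : 2 ≤ v) (hvy : v < y) (hvy' : v < y')
    (he : s(v, y) ∈ LS.links) (he' : s(v, y') ∈ LS.links) : y = y' := by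
  obtain ⟨j, hj, t, ht, hvt, rfl⟩ := LS.exists_node_eq_of_mk_mem_links hv hvy he
  obtain ⟨j', hj', t', ht', hvt', rfl⟩ := LS.exists_node_eq_of_mk_mem_links hv hvy' he'
  simp only [mem_Icc] at ht ht'
  have hyn := (LS.node_mem_Icc hj (t := t + 1) (by omega)).2
  obtain ⟨_, -, huniq⟩ := LS.cover v (by simp; omega)
  obtain rfl : j = j' := (huniq j ⟨hj, t, by simp; omega, hvt⟩).trans
    (huniq j' ⟨hj', t', by simp; omega, hvt'⟩).symm
  obtain rfl : t = t' := (LS.node_strictMonoOn hj).injOn (show t ∈ Set.Iic (k / 2 + 1) by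
    simp; omega) (show t' ∈ Set.Iic (k / 2 + 1) by simp; omega) (hvt.trans hvt'.symm)
  rfl

lemma sdiff_subset_deltaL_pred {L' : Finset (Sym2 ℕ)} {h : ℕ} (hh : 2 ≤ h)
    (hL' : L' ⊆ deltaL LS.links (Nset h)) (hmin : ¬ L' ⊆ deltaL LS.links (Nset (h - 1))) :
    deltaL LS.links (Nset h) \ L' ⊆ deltaL LS.links (Nset (h - 1)) := by
  obtain ⟨e₀, he₀, he₀'⟩ := not_subset.1 hmin
  obtain ⟨x₀, y₀, rfl, hl₀, hx₀1, hx₀, hy₀, -⟩ := LS.exists_eq_mk_of_mem_deltaL (hL' he₀)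
  have hx₀h : x₀ = h := by
    by_contra hne
    exact he₀' ((mk_mem_deltaL_Nset_iff (by omega) (by omega)).2 ⟨hl₀, by omega, by omega⟩)
  subst hx₀h
  intro e he
  obtain ⟨heδ, heL'⟩ := mem_sdiff.1 he
  obtain ⟨x, y, rfl, hl, hx1, hx, hy, -⟩ := LS.exists_eq_mk_of_mem_deltaL heδ
  refine (mk_mem_deltaL_Nset_iff hx1 (by omega)).2 ⟨hl, ?_, by omega⟩
  by_contra hxh
  obtain rfl : x = x₀ := by omega
  obtain rfl := LS.eq_of_mk_mem_links hh hy hy₀ hl hl₀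
  exact heL' he₀

end LinksSystem

theorem statement10_general (k : ℕ) (hk : 4 ≤ k) (LS : LinksSystem k)
    (ℓ : ℕ → Sym2 ℕ)
    (hℓ1 : ∀ i ∈ Finset.Icc 1 k, ℓ i ∈ LS.P i ∧ ∃ b, ℓ i = s(1, b))
    (φ : Sym2 ℕ → ℕ)
    (hφ : ∀ i ∈ Finset.Icc 1 k, ∀ e ∈ LS.P i, φ e = i)
    (L' : Finset (Sym2 ℕ)) (hL'card : L'.card = k / 2) (hL'k : ℓ k ∉ L')
    (h : ℕ) (hh1 : L' ⊆ deltaL LS.links (Nset h))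
    (hh2 : ∀ i : ℕ, L' ⊆ deltaL LS.links (Nset i) → h ≤ i)
    (hh3 : 2 ≤ h)
    (g : ℕ) (hg1 : deltaL LS.links (Nset h) \ L' ⊆ deltaL LS.links (Nset g))
    (hg2 : ∀ i : ℕ, deltaL LS.links (Nset h) \ L' ⊆ deltaL LS.links (Nset i) → g ≤ i) :
    g < h ∧
    (deltaL LS.links (Nset g) \ (deltaL LS.links (Nset h) \ L')).card = k / 2 ∧
    ℓ k ∉ deltaL LS.links (Nset g) \ (deltaL LS.links (Nset h) \ L') ∧
    (∀ e : Sym2 ℕ,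
      chi (deltaL LS.links (Nset g) \ (deltaL LS.links (Nset h) \ L')) e
        = chi L' e - chi (deltaL LS.links (Nset h)) e
            + chi (deltaL LS.links (Nset g)) e) ∧
    (deltaL LS.links (Nset g) \ (deltaL LS.links (Nset h) \ L')).image φ
      = L'.image φ := by
  have hk1 : 1 ≤ k := by omega
  have hmin : ¬ L' ⊆ deltaL LS.links (Nset (h - 1)) := fun hs => by
    have := hh2 _ hs
    omega
  obtain ⟨e₀, he₀, -⟩ := not_subset.1 hmin
  have hhn : h < nn k := LS.lt_nn_of_mem_deltaL (hh1 he₀)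
  have hℓk : ℓ k = s(1, nn k) := by
    simpa [LinksSystem.P_self] using (hℓ1 k (by simp [hk1])).1
  have hℓk_bar : ℓ k ∈ deltaL LS.links (Nset h) \ L' :=
    mem_sdiff.2 ⟨hℓk ▸ (LS.mk_one_nn_mem_deltaL_iff hk1).2 ⟨by omega, hhn⟩, hL'k⟩
  have hgh : g < h := by
    have := hg2 _ (LS.sdiff_subset_deltaL_pred hh3 hh1 hmin)
    omega
  have hg := (LS.mk_one_nn_mem_deltaL_iff hk1).1 (hℓk ▸ hg1 hℓk_bar)
  have hinj := LS.injOn_deltaL hφ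
  have himg : (deltaL LS.links (Nset g)).image φ = (deltaL LS.links (Nset h)).image φ := by
    rw [LS.image_deltaL hφ hg.1 hg.2, LS.image_deltaL hφ (by omega) hhn]
  refine ⟨hgh, ?_, fun hmem => (mem_sdiff.1 hmem).2 hℓk_bar, chi_sdiff_sdiff hh1 hg1,
    image_sdiff_sdiff_of_image_eq hh1 hg1 (hinj g) (hinj h) himg⟩
  rw [card_sdiff_sdiff_of_image_eq hh1 hg1 (hinj g) (hinj h) himg, hL'card]

/-- for every links system with links indexed as described and with `φ`
assigning to each link the index of the class `P_i` containing it: if `L'` is a set of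
exactly `k/2` links with `ℓ_k ∉ L'` contained in some nested cut, `h ≥ 2` is the smallest
index with `L' ⊆ δ_L(N_h)`, `L̄ = δ_L(N_h) \ L'`, and `g` is the smallest index with
`L̄ ⊆ δ_L(N_g)`, then `g < h` and `L'' = δ_L(N_g) \ L̄` consists of exactly `k/2` links,
does not contain `ℓ_k`, satisfies `χ^{L''} = χ^{L'} - χ^{δ_L(N_h)} + χ^{δ_L(N_g)}`,
and satisfies `φ(L'') = φ(L')`. -/
theorem statement10 (k : ℕ) (hk : 4 ≤ k) (hke : Even k) (LS : LinksSystem k)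
    (ℓ : ℕ → Sym2 ℕ)
    (hℓ1 : ∀ i ∈ Finset.Icc 1 k, ℓ i ∈ LS.P i ∧ ∃ b, ℓ i = s(1, b))
    (hℓ2 : ∀ v ∈ Finset.Icc 2 (nn k - 1),
        ℓ (k + v - 1) ∈ LS.links ∧ ∃ b, v < b ∧ ℓ (k + v - 1) = s(v, b))
    (φ : Sym2 ℕ → ℕ)
    (hφ : ∀ i ∈ Finset.Icc 1 k, ∀ e ∈ LS.P i, φ e = i)
    (L' : Finset (Sym2 ℕ)) (hL'card : L'.card = k / 2) (hL'k : ℓ k ∉ L')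
    (h : ℕ) (hh1 : L' ⊆ deltaL LS.links (Nset h))
    (hh2 : ∀ i : ℕ, L' ⊆ deltaL LS.links (Nset i) → h ≤ i)
    (hh3 : 2 ≤ h)
    (g : ℕ) (hg1 : deltaL LS.links (Nset h) \ L' ⊆ deltaL LS.links (Nset g))
    (hg2 : ∀ i : ℕ, deltaL LS.links (Nset h) \ L' ⊆ deltaL LS.links (Nset i) → g ≤ i) :
    g < h ∧
    (deltaL LS.links (Nset g) \ (deltaL LS.links (Nset h) \ L')).card = k / 2 ∧
    ℓ k ∉ deltaL LS.links (Nset g) \ (deltaL LS.links (Nset h) \ L') ∧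
    (∀ e : Sym2 ℕ,
      chi (deltaL LS.links (Nset g) \ (deltaL LS.links (Nset h) \ L')) e
        = chi L' e - chi (deltaL LS.links (Nset h)) e
            + chi (deltaL LS.links (Nset g)) e) ∧
    (deltaL LS.links (Nset g) \ (deltaL LS.links (Nset h) \ L')).image φ
      = L'.image φ :=
  statement10_general k hk LS ℓ hℓ1 φ hφ L' hL'card hL'k h hh1 hh2 hh3 g hg1 hg2

end CoverSmallCuts
end
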